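/- arXiv:2312.15656 — 3 statements merged into one kernel-verified Lean document; each statement's English description precedes it below -/
import Mathlib

section
/- For every real s > 1 there exists a constant C_s > 0 with the following property: for every c : ℤ² → ℂ with c(0) = 0 such that B := ( Σ_{k ≠ 0} |k|^{2s} |c(k)|² )^{1/2} is finite, setting A := ( Σ_{k ≠ 0} |k|² |c(k)|² )^{1/2}, one has Σ_{k ≠ 0} |c(k)| ≤ C_s · ( A · √( log(B + 3) ) + 1 ). -/
open scoped ENNReal

/-- Squared Euclidean norm of a lattice point `k ∈ ℤ²`. -/
noncomputable def latNormSq (k : ℤ × ℤ) : ℝ := (k.1 : ℝ) ^ 2 + (k.2 : ℝ) ^ 2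

namespace LogInterp

/-- Sup norm of a lattice point, as a natural number. -/
def latMax (k : ℤ × ℤ) : ℕ := max k.1.natAbs k.2.natAbs

lemma latMax_sq_le (k : ℤ × ℤ) : ((latMax k : ℝ)) ^ 2 ≤ latNormSq k := by
  have h1 : ((k.1.natAbs : ℝ)) ^ 2 = (k.1 : ℝ) ^ 2 := by
    rw [Nat.cast_natAbs, Int.cast_abs, sq_abs]
  have h2 : ((k.2.natAbs : ℝ)) ^ 2 = (k.2 : ℝ) ^ 2 := by
    rw [Nat.cast_natAbs, Int.cast_abs, sq_abs]
  rcases max_cases k.1.natAbs k.2.natAbs with ⟨h, _⟩ | ⟨h, _⟩ <;>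
    simp only [latMax, latNormSq, h]
  · nlinarith [sq_nonneg ((k.2 : ℝ))]
  · nlinarith [sq_nonneg ((k.1 : ℝ))]

lemma one_le_latMax {k : ℤ × ℤ} (hk : k ≠ 0) : 1 ≤ latMax k := by
  rcases Nat.eq_zero_or_pos (latMax k) with h | h
  · exfalso
    apply hk
    simp only [latMax, Nat.max_eq_zero_iff] at h
    exact Prod.ext (Int.natAbs_eq_zero.mp h.1) (Int.natAbs_eq_zero.mp h.2)
  · exact h

lemma one_le_latNormSq {k : ℤ × ℤ} (hk : k ≠ 0) : 1 ≤ latNormSq k := by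
  refine le_trans ?_ (latMax_sq_le k)
  have := one_le_latMax hk
  have h1 : (1 : ℝ) ≤ (latMax k : ℝ) := by exact_mod_cast this
  nlinarith

lemma latNormSq_pos {k : ℤ × ℤ} (hk : k ≠ 0) : 0 < latNormSq k :=
  lt_of_lt_of_le one_pos (one_le_latNormSq hk)

lemma latNormSq_nonneg (k : ℤ × ℤ) : 0 ≤ latNormSq k := by
  simp only [latNormSq]
  positivity

/-- The box `[-m,m]²` in `ℤ²`. -/
noncomputable def box (m : ℕ) : Finset (ℤ × ℤ) := Finset.Icc (-(m : ℤ)) m ×ˢ Finset.Icc (-(m : ℤ)) m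

lemma mem_box {k : ℤ × ℤ} {m : ℕ} : k ∈ box m ↔ latMax k ≤ m := by
  simp only [box, Finset.mem_product, Finset.mem_Icc, latMax, max_le_iff]
  omega

lemma card_box (m : ℕ) : (box m).card = (2 * m + 1) * (2 * m + 1) := by
  rw [box, Finset.card_product, Int.card_Icc]
  have h : ((m : ℤ) + 1 - -(m : ℤ)).toNat = 2 * m + 1 := by omega
  rw [h]

lemma card_shell_le (m : ℕ) (hm : 1 ≤ m) : ((box m \ box (m - 1)).card) ≤ 8 * m := by
  have hsub : box (m - 1) ⊆ box m := by
    intro k hk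
    exact mem_box.mpr (le_trans (mem_box.mp hk) (by omega))
  rw [Finset.card_sdiff_of_subset hsub, card_box, card_box]
  obtain ⟨n, rfl⟩ := Nat.exists_eq_add_of_le hm
  have h1 : 1 + n - 1 = n := by omega
  rw [h1]
  have h2 : (2 * (1 + n) + 1) * (2 * (1 + n) + 1) = (2 * n + 1) * (2 * n + 1) + (8 * n + 8) := by
    ring
  omega

lemma card_fiber_le (F : Finset {k : ℤ × ℤ // k ≠ 0}) (m : ℕ) (hm : 1 ≤ m) :
    ((F.filter (fun k => latMax k.1 = m)).card) ≤ 8 * m := by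
  refine le_trans (Finset.card_le_card_of_injOn Subtype.val ?_ ?_) (card_shell_le m hm)
  · intro k hk
    rw [Finset.mem_coe, Finset.mem_filter] at hk
    rw [Finset.mem_coe, Finset.mem_sdiff]
    refine ⟨mem_box.mpr (le_of_eq hk.2), fun hmem => ?_⟩
    have h2 := mem_box.mp hmem
    rw [hk.2] at h2
    omega
  · intro a _ b _ h
    exact Subtype.ext h

lemma harmonic_le (M : ℕ) (hM : 1 ≤ M) :
    ∑ m ∈ Finset.Icc 1 M, ((m : ℝ))⁻¹ ≤ 1 + Real.log M := by
  induction M, hM using Nat.le_induction with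
  | base => norm_num
  | succ n hn ih =>
    rw [Finset.sum_Icc_succ_top (by omega : 1 ≤ n + 1)]
    have hn0 : (0 : ℝ) < (n : ℝ) := by exact_mod_cast hn
    have key : ((n : ℝ) + 1)⁻¹ ≤ Real.log ((n : ℕ) + 1) - Real.log n := by
      have h := Real.log_le_sub_one_of_pos (x := (n : ℝ) / ((n : ℝ) + 1)) (by positivity)
      rw [Real.log_div (ne_of_gt hn0) (by positivity)] at h
      have h2 : (n : ℝ) / ((n : ℝ) + 1) - 1 = -(((n : ℝ) + 1)⁻¹) := by field_simp; ring
      rw [h2] at h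
      linarith
    push_cast at key ⊢
    linarith

lemma key_ineq {p a : ℝ} (hp : 0 < p) (ha : 1 ≤ a) :
    p * (a + 1) ^ (-(1 + p)) ≤ a ^ (-p) - (a + 1) ^ (-p) := by
  have ha0 : 0 < a := lt_of_lt_of_le one_pos ha
  have hb : 0 < a + 1 := by linarith
  set X := (a + 1) ^ p with hX
  set Y := a ^ p with hY
  have hX0 : 0 < X := Real.rpow_pos_of_pos hb p
  have hY0 : 0 < Y := Real.rpow_pos_of_pos ha0 p
  have hl : (a + 1)⁻¹ ≤ Real.log ((a + 1) / a) := by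
    have h := Real.log_le_sub_one_of_pos (x := a / (a + 1)) (by positivity)
    rw [Real.log_div (ne_of_gt ha0) (ne_of_gt hb)] at h
    have h2 : Real.log ((a + 1) / a) = Real.log (a + 1) - Real.log a :=
      Real.log_div (ne_of_gt hb) (ne_of_gt ha0)
    have h3 : a / (a + 1) - 1 = -((a + 1)⁻¹) := by field_simp; ring
    rw [h3] at h
    linarith
  have hexp : 1 + p * (a + 1)⁻¹ ≤ ((a + 1) / a) ^ p := by
    have h1 : ((a + 1) / a : ℝ) ^ p = Real.exp (Real.log ((a + 1) / a) * p) :=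
      Real.rpow_def_of_pos (by positivity) p
    rw [h1]
    calc 1 + p * (a + 1)⁻¹ ≤ 1 + p * Real.log ((a + 1) / a) := by nlinarith
      _ ≤ Real.exp (p * Real.log ((a + 1) / a)) := Real.add_one_le_exp _ |>.trans_eq' (by ring)
      _ = Real.exp (Real.log ((a + 1) / a) * p) := by ring_nf
  have hdiv : ((a + 1) / a) ^ p = X / Y := Real.div_rpow hb.le ha0.le p
  rw [hdiv] at hexp
  have h4 : Y * (1 + p * (a + 1)⁻¹) ≤ X := by
    calc Y * (1 + p * (a + 1)⁻¹) ≤ Y * (X / Y) := by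
          exact mul_le_mul_of_nonneg_left hexp hY0.le
      _ = X := by rw [mul_comm]; exact div_mul_cancel₀ X (ne_of_gt hY0)
  have e1 : a ^ (-p) = Y⁻¹ := by rw [Real.rpow_neg ha0.le]
  have e2 : (a + 1) ^ (-p) = X⁻¹ := by rw [Real.rpow_neg hb.le]
  have e3 : (a + 1) ^ (-(1 + p)) = ((a + 1) * X)⁻¹ := by
    rw [Real.rpow_neg hb.le, Real.rpow_add hb, Real.rpow_one]
  rw [e1, e2, e3]
  have h5 : Y⁻¹ - X⁻¹ = (X - Y) * (X⁻¹ * Y⁻¹) := by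
    field_simp
  have h6 : p * ((a + 1) * X)⁻¹ = (Y * (p * (a + 1)⁻¹)) * (X⁻¹ * Y⁻¹) := by
    field_simp
  rw [h5, h6]
  have h7 : Y * (p * (a + 1)⁻¹) ≤ X - Y := by linarith
  exact mul_le_mul_of_nonneg_right h7 (by positivity)

lemma telescope (g : ℕ → ℝ) (M : ℕ) :
    ∀ N, M ≤ N → (∑ m ∈ Finset.Icc (M + 1) N, (g (m - 1) - g m)) = g M - g N := by
  intro N hN
  induction N, hN using Nat.le_induction with
  | base =>
    rw [Finset.Icc_eq_empty (by omega)]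
    simp
  | succ n hn ih =>
    rw [Finset.sum_Icc_succ_top (by omega : M + 1 ≤ n + 1), ih]
    simp only [Nat.add_sub_cancel]
    ring

lemma low_lattice (F : Finset {k : ℤ × ℤ // k ≠ 0}) (M : ℕ) (hM : 1 ≤ M)
    (hF : ∀ k ∈ F, latMax k.1 ≤ M) :
    ∑ k ∈ F, (latNormSq k.1)⁻¹ ≤ 8 * (1 + Real.log M) := by
  have hmaps : ∀ k ∈ F, latMax k.1 ∈ Finset.Icc 1 M := fun k hk =>
    Finset.mem_Icc.mpr ⟨one_le_latMax k.2, hF k hk⟩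
  rw [← Finset.sum_fiberwise_of_maps_to hmaps]
  have fiber_bound : ∀ m ∈ Finset.Icc 1 M,
      (∑ k ∈ F.filter (fun k => latMax k.1 = m), (latNormSq k.1)⁻¹) ≤ 8 * ((m : ℝ))⁻¹ := by
    intro m hm
    have hm1 : 1 ≤ m := (Finset.mem_Icc.mp hm).1
    have hm0 : (0 : ℝ) < (m : ℝ) := by exact_mod_cast hm1
    have hterm : ∀ k ∈ F.filter (fun k => latMax k.1 = m),
        (latNormSq k.1)⁻¹ ≤ (((m : ℝ)) ^ 2)⁻¹ := by
      intro k hk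
      have hkm : latMax k.1 = m := (Finset.mem_filter.mp hk).2
      have hle : ((m : ℝ)) ^ 2 ≤ latNormSq k.1 := by
        rw [← hkm]
        exact latMax_sq_le k.1
      exact inv_anti₀ (by positivity) hle
    calc (∑ k ∈ F.filter (fun k => latMax k.1 = m), (latNormSq k.1)⁻¹)
        ≤ ∑ _k ∈ F.filter (fun k => latMax k.1 = m), (((m : ℝ)) ^ 2)⁻¹ :=
          Finset.sum_le_sum hterm
      _ = ((F.filter (fun k => latMax k.1 = m)).card : ℝ) * (((m : ℝ)) ^ 2)⁻¹ := by
          rw [Finset.sum_const, nsmul_eq_mul]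
      _ ≤ (8 * m : ℝ) * (((m : ℝ)) ^ 2)⁻¹ := by
          have := card_fiber_le F m hm1
          have hc : ((F.filter (fun k => latMax k.1 = m)).card : ℝ) ≤ (8 * m : ℝ) := by
            exact_mod_cast this
          exact mul_le_mul_of_nonneg_right hc (by positivity)
      _ = 8 * ((m : ℝ))⁻¹ := by field_simp
  calc (∑ m ∈ Finset.Icc 1 M, ∑ k ∈ F.filter (fun k => latMax k.1 = m), (latNormSq k.1)⁻¹)
      ≤ ∑ m ∈ Finset.Icc 1 M, 8 * ((m : ℝ))⁻¹ := Finset.sum_le_sum fiber_bound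
    _ = 8 * ∑ m ∈ Finset.Icc 1 M, ((m : ℝ))⁻¹ := by rw [Finset.mul_sum]
    _ ≤ 8 * (1 + Real.log M) := by
        have := harmonic_le M hM
        linarith

lemma high_lattice (s : ℝ) (hs : 1 < s) (F : Finset {k : ℤ × ℤ // k ≠ 0}) (M : ℕ) (hM : 1 ≤ M)
    (hF : ∀ k ∈ F, M + 1 ≤ latMax k.1) :
    ∑ k ∈ F, (latNormSq k.1) ^ (-s) ≤ (8 / (2 * s - 2)) * (M : ℝ) ^ (-(2 * s - 2)) := by
  have hp0 : 0 < 2 * s - 2 := by linarith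
  set p := 2 * s - 2 with hp
  set g : ℕ → ℝ := fun n => (n : ℝ) ^ (-p) with hg
  set M' := F.sup (fun k => latMax k.1) with hM'
  have hmaps : ∀ k ∈ F, latMax k.1 ∈ Finset.Icc (M + 1) M' := fun k hk =>
    Finset.mem_Icc.mpr ⟨hF k hk, Finset.le_sup (f := fun k => latMax k.1) hk⟩
  rw [← Finset.sum_fiberwise_of_maps_to hmaps]
  have fiber_bound : ∀ m ∈ Finset.Icc (M + 1) M',
      (∑ k ∈ F.filter (fun k => latMax k.1 = m), (latNormSq k.1) ^ (-s)) ≤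
        (8 / p) * (g (m - 1) - g m) := by
    intro m hm
    have hm1 : M + 1 ≤ m := (Finset.mem_Icc.mp hm).1
    have hm2 : 2 ≤ m := by omega
    have hm0 : (0 : ℝ) < (m : ℝ) := by exact_mod_cast (by omega : 0 < m)
    have hterm : ∀ k ∈ F.filter (fun k => latMax k.1 = m),
        (latNormSq k.1) ^ (-s) ≤ (((m : ℝ)) ^ 2) ^ (-s) := by
      intro k hk
      have hkm : latMax k.1 = m := (Finset.mem_filter.mp hk).2
      have hle : ((m : ℝ)) ^ 2 ≤ latNormSq k.1 := by
        rw [← hkm]; exact latMax_sq_le k.1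
      exact Real.rpow_le_rpow_of_nonpos (by positivity) hle (by linarith)
    have hkey : ((8 : ℝ) * m) * (((m : ℝ)) ^ 2) ^ (-s) ≤ (8 / p) * (g (m - 1) - g m) := by
      have ha : (1 : ℝ) ≤ (m : ℝ) - 1 := by
        have : (2 : ℝ) ≤ (m : ℝ) := by exact_mod_cast hm2
        linarith
      have hki := key_ineq hp0 ha
      have hsub : ((m : ℝ) - 1) + 1 = (m : ℝ) := by ring
      rw [hsub] at hki
      have hgm : g (m - 1) = ((m : ℝ) - 1) ^ (-p) := by
        have hc : ((m - 1 : ℕ) : ℝ) = (m : ℝ) - 1 := by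
          push_cast [Nat.cast_sub (by omega : 1 ≤ m)]
          ring
        show ((m - 1 : ℕ) : ℝ) ^ (-p) = ((m : ℝ) - 1) ^ (-p)
        rw [hc]
      have hgm2 : g m = (m : ℝ) ^ (-p) := rfl
      rw [hgm, hgm2]
      -- (m²)^(-s) = m^(-(1+p)) * m⁻¹
      have e1 : (((m : ℝ)) ^ 2) ^ (-s) = (m : ℝ) ^ ((2 : ℝ) * (-s)) := by
        rw [Real.rpow_mul hm0.le, Real.rpow_two]
      have e2 : (m : ℝ) ^ ((2 : ℝ) * (-s)) = (m : ℝ) ^ (-(1 + p)) * (m : ℝ) ^ (-(1 : ℝ)) := by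
        rw [← Real.rpow_add hm0]
        congr 1
        rw [hp]; ring
      have e3 : (m : ℝ) ^ (-(1 : ℝ)) = ((m : ℝ))⁻¹ := by
        rw [Real.rpow_neg hm0.le, Real.rpow_one]
      calc ((8 : ℝ) * m) * (((m : ℝ)) ^ 2) ^ (-s)
          = 8 * ((m : ℝ) * ((m : ℝ))⁻¹) * (m : ℝ) ^ (-(1 + p)) := by
            rw [e1, e2, e3]; ring
        _ = 8 * (m : ℝ) ^ (-(1 + p)) := by
            rw [mul_inv_cancel₀ (ne_of_gt hm0)]; ring
        _ = (8 / p) * (p * (m : ℝ) ^ (-(1 + p))) := by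
            field_simp
        _ ≤ (8 / p) * (((m : ℝ) - 1) ^ (-p) - (m : ℝ) ^ (-p)) := by
            exact mul_le_mul_of_nonneg_left hki (by positivity)
    calc (∑ k ∈ F.filter (fun k => latMax k.1 = m), (latNormSq k.1) ^ (-s))
        ≤ ∑ _k ∈ F.filter (fun k => latMax k.1 = m), (((m : ℝ)) ^ 2) ^ (-s) :=
          Finset.sum_le_sum hterm
      _ = ((F.filter (fun k => latMax k.1 = m)).card : ℝ) * (((m : ℝ)) ^ 2) ^ (-s) := by
          rw [Finset.sum_const, nsmul_eq_mul]
      _ ≤ ((8 : ℝ) * m) * (((m : ℝ)) ^ 2) ^ (-s) := by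
          have := card_fiber_le F m (by omega)
          have hc : ((F.filter (fun k => latMax k.1 = m)).card : ℝ) ≤ (8 * m : ℝ) := by
            exact_mod_cast this
          exact mul_le_mul_of_nonneg_right hc (Real.rpow_nonneg (by positivity) _)
      _ ≤ (8 / p) * (g (m - 1) - g m) := hkey
  calc (∑ m ∈ Finset.Icc (M + 1) M', ∑ k ∈ F.filter (fun k => latMax k.1 = m),
          (latNormSq k.1) ^ (-s))
      ≤ ∑ m ∈ Finset.Icc (M + 1) M', (8 / p) * (g (m - 1) - g m) :=
        Finset.sum_le_sum fiber_bound
    _ ≤ (8 / p) * (M : ℝ) ^ (-p) := by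
        rcases le_or_gt (M + 1) M' with h | h
        · rw [← Finset.mul_sum, telescope g M M' (by omega)]
          have hgM' : 0 ≤ g M' := Real.rpow_nonneg (by positivity) _
          have hgM : g M = (M : ℝ) ^ (-p) := rfl
          rw [← hgM]
          have : g M - g M' ≤ g M := by linarith
          exact mul_le_mul_of_nonneg_left this (by positivity)
        · rw [Finset.Icc_eq_empty (by omega)]
          simp only [Finset.sum_empty]
          positivity

end LogInterp

open LogInterp

/-- Log-type interpolation inequality in Fourier-coefficient form:
Σ_{k≠0} |c(k)| ≤ C_s ( A √(log(B+3)) + 1 ) where A = (Σ |k|²|c(k)|²)^{1/2} and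
B = (Σ |k|^{2s}|c(k)|²)^{1/2} is assumed finite. -/
theorem log_interpolation (s : ℝ) (hs : 1 < s) :
    ∃ C : ℝ, 0 < C ∧
      ∀ c : ℤ × ℤ → ℂ, c 0 = 0 →
        (Summable fun k : {k : ℤ × ℤ // k ≠ 0} =>
          (latNormSq k.1) ^ s * ‖c k.1‖ ^ 2) →
        (∑' k : {k : ℤ × ℤ // k ≠ 0}, ENNReal.ofReal ‖c k.1‖) ≤
          ENNReal.ofReal
            (C * (Real.sqrt (∑' k : {k : ℤ × ℤ // k ≠ 0},
                    latNormSq k.1 * ‖c k.1‖ ^ 2) *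
                  Real.sqrt (Real.log
                    (Real.sqrt (∑' k : {k : ℤ × ℤ // k ≠ 0},
                      (latNormSq k.1) ^ s * ‖c k.1‖ ^ 2) + 3)) + 1)) := by
  have hp0 : 0 < 2 * s - 2 := by linarith
  have hsm1 : (0 : ℝ) < s - 1 := by linarith
  set p := 2 * s - 2 with hpdef
  set q := (s - 1)⁻¹ with hqdef
  have hq0 : 0 < q := by rw [hqdef]; exact inv_pos.mpr hsm1
  refine ⟨Real.sqrt (8 * (2 + q)) + Real.sqrt (8 / p) + 1, by positivity, ?_⟩
  intro c hc0 hB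
  set SA := ∑' k : {k : ℤ × ℤ // k ≠ 0}, latNormSq k.1 * ‖c k.1‖ ^ 2 with hSAdef
  set T := ∑' k : {k : ℤ × ℤ // k ≠ 0}, (latNormSq k.1) ^ s * ‖c k.1‖ ^ 2 with hTdef
  set B := Real.sqrt T with hBdef
  set A := Real.sqrt SA with hAdef
  set L := Real.log (B + 3) with hLdef
  have hT0 : 0 ≤ T := tsum_nonneg fun k =>
    mul_nonneg (Real.rpow_nonneg (latNormSq_nonneg _) _) (sq_nonneg _)
  have hB0 : 0 ≤ B := Real.sqrt_nonneg _
  have hA0 : 0 ≤ A := Real.sqrt_nonneg _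
  have hSummA : Summable (fun k : {k : ℤ × ℤ // k ≠ 0} => latNormSq k.1 * ‖c k.1‖ ^ 2) := by
    refine Summable.of_nonneg_of_le
      (fun k => mul_nonneg (latNormSq_nonneg _) (sq_nonneg _)) (fun k => ?_) hB
    have h1 : (1 : ℝ) ≤ latNormSq k.1 := one_le_latNormSq k.2
    have h2 : latNormSq k.1 ≤ latNormSq k.1 ^ s := by
      nth_rewrite 1 [← Real.rpow_one (latNormSq k.1)]
      exact Real.rpow_le_rpow_of_exponent_le h1 hs.le
    exact mul_le_mul_of_nonneg_right h2 (by positivity)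
  have hL1 : 1 ≤ L := by
    have h3 : Real.log 3 ≤ L := by
      rw [hLdef]
      exact Real.log_le_log (by norm_num) (by linarith)
    have h4 : (1 : ℝ) ≤ Real.log 3 := by
      rw [Real.le_log_iff_exp_le (by norm_num)]
      have := Real.exp_one_lt_d9
      linarith
    linarith
  have hL0 : 0 ≤ L := by linarith
  set M : ℕ := max 1 ⌈B ^ q⌉₊ with hMdef
  have hM1 : 1 ≤ M := le_max_left _ _
  have hMR : (1 : ℝ) ≤ (M : ℝ) := by exact_mod_cast hM1
  have hMpos : (0 : ℝ) < (M : ℝ) := by linarith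
  have hMge : B ^ q ≤ (M : ℝ) := by
    refine le_trans (Nat.le_ceil _) ?_
    exact_mod_cast le_max_right 1 ⌈B ^ q⌉₊
  have hMle : (M : ℝ) ≤ B ^ q + 1 := by
    have h1 : (⌈B ^ q⌉₊ : ℝ) < B ^ q + 1 := Nat.ceil_lt_add_one (by positivity)
    have h2 : ((M : ℕ) : ℝ) = max (1 : ℝ) (⌈B ^ q⌉₊ : ℝ) := by
      rw [hMdef]; push_cast [Nat.cast_max]; rfl
    rw [h2]
    refine max_le ?_ h1.le
    have := Real.rpow_nonneg hB0 q
    linarith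
  -- T ≤ M ^ p
  have hTM : T ≤ (M : ℝ) ^ p := by
    have hB2 : T = B ^ 2 := (Real.sq_sqrt hT0).symm
    have hMp1 : (1 : ℝ) ≤ (M : ℝ) ^ p := by
      rw [← Real.rpow_zero (M : ℝ)]
      exact Real.rpow_le_rpow_of_exponent_le hMR hp0.le
    rcases le_total B 1 with hb | hb
    · rw [hB2]
      nlinarith
    · have h1 : B ^ (q * p) ≤ (M : ℝ) ^ p := by
        rw [Real.rpow_mul hB0]
        exact Real.rpow_le_rpow (Real.rpow_nonneg hB0 q) hMge hp0.le
      have h2 : q * p = 2 := by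
        rw [hqdef, hpdef]
        field_simp
      rw [h2] at h1
      rw [hB2, ← Real.rpow_two]
      exact h1
  -- log bound
  have hlogM : 1 + Real.log M ≤ (2 + q) * L := by
    have hlM : Real.log M ≤ (1 + q) * L := by
      have hMB : Real.log M ≤ Real.log (B ^ q + 1) :=
        Real.log_le_log hMpos hMle
      have hlog3 : Real.log 3 ≤ L := by
        rw [hLdef]
        exact Real.log_le_log (by norm_num) (by linarith)
      rcases le_total B 1 with hb | hb
      · have h1 : B ^ q ≤ 1 := Real.rpow_le_one hB0 hb hq0.le
        have h2 : Real.log (B ^ q + 1) ≤ Real.log 3 := by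
          refine Real.log_le_log (by positivity) ?_
          linarith
        nlinarith
      · have hBpos : 0 < B := lt_of_lt_of_le one_pos hb
        have hBq1 : (1 : ℝ) ≤ B ^ q := Real.one_le_rpow hb hq0.le
        have h1 : B ^ q + 1 ≤ 2 * B ^ q := by linarith
        have hlogB : Real.log B ≤ L := by
          rw [hLdef]
          exact Real.log_le_log hBpos (by linarith)
        have hlog2 : Real.log 2 ≤ L := by
          have h5 : Real.log 2 ≤ Real.log 3 := Real.log_le_log (by norm_num) (by norm_num)
          linarith
        calc Real.log M ≤ Real.log (B ^ q + 1) := hMB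
          _ ≤ Real.log (2 * B ^ q) := Real.log_le_log (by positivity) h1
          _ = Real.log 2 + q * Real.log B := by
              rw [Real.log_mul (by norm_num) (by positivity), Real.log_rpow hBpos]
          _ ≤ L + q * L := add_le_add hlog2 (mul_le_mul_of_nonneg_left hlogB hq0.le)
          _ = (1 + q) * L := by ring
    linarith
  -- main estimate
  rw [ENNReal.tsum_eq_iSup_sum]
  refine iSup_le fun F => ?_
  rw [← ENNReal.ofReal_sum_of_nonneg (fun k _ => norm_nonneg _)]
  refine ENNReal.ofReal_le_ofReal ?_
  rw [← Finset.sum_filter_add_sum_filter_not F (fun k => latMax k.1 ≤ M) (fun k => ‖c k.1‖)]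
  set F₁ := F.filter (fun k => latMax k.1 ≤ M) with hF₁def
  set F₂ := F.filter (fun k => ¬ latMax k.1 ≤ M) with hF₂def
  have hF1 : ∑ k ∈ F₁, ‖c k.1‖ ≤ Real.sqrt (8 * (2 + q)) * (A * Real.sqrt L) := by
    have hcs : ∑ k ∈ F₁, ‖c k.1‖ ≤
        Real.sqrt (∑ k ∈ F₁, (latNormSq k.1)⁻¹) *
          Real.sqrt (∑ k ∈ F₁, latNormSq k.1 * ‖c k.1‖ ^ 2) := by
      have h := Real.sum_sqrt_mul_sqrt_le F₁
        (f := fun k : {k : ℤ × ℤ // k ≠ 0} => (latNormSq k.1)⁻¹)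
        (g := fun k : {k : ℤ × ℤ // k ≠ 0} => latNormSq k.1 * ‖c k.1‖ ^ 2)
        (fun k => inv_nonneg.mpr (latNormSq_nonneg _))
        (fun k => mul_nonneg (latNormSq_nonneg _) (sq_nonneg _))
      refine le_trans (le_of_eq (Finset.sum_congr rfl fun k _ => ?_)) h
      have hpos : 0 < latNormSq k.1 := latNormSq_pos k.2
      rw [← Real.sqrt_mul (inv_nonneg.mpr (latNormSq_nonneg _))]
      have h2 : (latNormSq k.1)⁻¹ * (latNormSq k.1 * ‖c k.1‖ ^ 2) = ‖c k.1‖ ^ 2 := by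
        field_simp
      rw [h2, Real.sqrt_sq (norm_nonneg _)]
    have h1 : ∑ k ∈ F₁, (latNormSq k.1)⁻¹ ≤ 8 * (1 + Real.log M) :=
      low_lattice F₁ M hM1 (fun k hk => (Finset.mem_filter.mp hk).2)
    have h2 : ∑ k ∈ F₁, latNormSq k.1 * ‖c k.1‖ ^ 2 ≤ SA := by
      rw [hSAdef]
      exact Summable.sum_le_tsum F₁
        (fun k _ => mul_nonneg (latNormSq_nonneg _) (sq_nonneg _)) hSummA
    have h3 : Real.sqrt (∑ k ∈ F₁, (latNormSq k.1)⁻¹) ≤ Real.sqrt (8 * (2 + q) * L) := by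
      refine Real.sqrt_le_sqrt ?_
      linarith [h1, hlogM]
    have h4 : Real.sqrt (∑ k ∈ F₁, latNormSq k.1 * ‖c k.1‖ ^ 2) ≤ A := by
      rw [hAdef]
      exact Real.sqrt_le_sqrt h2
    calc ∑ k ∈ F₁, ‖c k.1‖
        ≤ Real.sqrt (∑ k ∈ F₁, (latNormSq k.1)⁻¹) *
            Real.sqrt (∑ k ∈ F₁, latNormSq k.1 * ‖c k.1‖ ^ 2) := hcs
      _ ≤ Real.sqrt (8 * (2 + q) * L) * A :=
          mul_le_mul h3 h4 (Real.sqrt_nonneg _) (Real.sqrt_nonneg _)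
      _ = Real.sqrt (8 * (2 + q)) * (A * Real.sqrt L) := by
          rw [Real.sqrt_mul (by positivity)]
          ring
  have hF2 : ∑ k ∈ F₂, ‖c k.1‖ ≤ Real.sqrt (8 / p) := by
    have hcs : ∑ k ∈ F₂, ‖c k.1‖ ≤
        Real.sqrt (∑ k ∈ F₂, (latNormSq k.1) ^ (-s)) *
          Real.sqrt (∑ k ∈ F₂, (latNormSq k.1) ^ s * ‖c k.1‖ ^ 2) := by
      have h := Real.sum_sqrt_mul_sqrt_le F₂
        (f := fun k : {k : ℤ × ℤ // k ≠ 0} => (latNormSq k.1) ^ (-s))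
        (g := fun k : {k : ℤ × ℤ // k ≠ 0} => (latNormSq k.1) ^ s * ‖c k.1‖ ^ 2)
        (fun k => Real.rpow_nonneg (le_of_lt (latNormSq_pos k.2)) _)
        (fun k => mul_nonneg (Real.rpow_nonneg (le_of_lt (latNormSq_pos k.2)) _) (by positivity))
      refine le_trans (le_of_eq (Finset.sum_congr rfl fun k _ => ?_)) h
      have hpos : 0 < latNormSq k.1 := latNormSq_pos k.2
      rw [← Real.sqrt_mul (Real.rpow_nonneg hpos.le _)]
      have h2 : (latNormSq k.1) ^ (-s) * ((latNormSq k.1) ^ s * ‖c k.1‖ ^ 2) = ‖c k.1‖ ^ 2 := by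
        rw [← mul_assoc, ← Real.rpow_add hpos]
        simp
      rw [h2, Real.sqrt_sq (norm_nonneg _)]
    have h1 : ∑ k ∈ F₂, (latNormSq k.1) ^ (-s) ≤ (8 / p) * (M : ℝ) ^ (-p) := by
      rw [hpdef]
      refine high_lattice s hs F₂ M hM1 (fun k hk => ?_)
      have h5 := (Finset.mem_filter.mp hk).2
      omega
    have h2 : ∑ k ∈ F₂, (latNormSq k.1) ^ s * ‖c k.1‖ ^ 2 ≤ T := by
      rw [hTdef]
      exact Summable.sum_le_tsum F₂ (fun k _ =>
        mul_nonneg (Real.rpow_nonneg (le_of_lt (latNormSq_pos k.2)) _) (by positivity)) hB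
    have hMp : 0 < (M : ℝ) ^ p := Real.rpow_pos_of_pos hMpos p
    have hMT : (M : ℝ) ^ (-p) * T ≤ 1 := by
      rw [Real.rpow_neg hMpos.le]
      calc ((M : ℝ) ^ p)⁻¹ * T ≤ ((M : ℝ) ^ p)⁻¹ * ((M : ℝ) ^ p) :=
            mul_le_mul_of_nonneg_left hTM (by positivity)
        _ = 1 := inv_mul_cancel₀ (ne_of_gt hMp)
    calc ∑ k ∈ F₂, ‖c k.1‖
        ≤ Real.sqrt (∑ k ∈ F₂, (latNormSq k.1) ^ (-s)) *
            Real.sqrt (∑ k ∈ F₂, (latNormSq k.1) ^ s * ‖c k.1‖ ^ 2) := hcs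
      _ ≤ Real.sqrt ((8 / p) * (M : ℝ) ^ (-p)) * Real.sqrt T :=
          mul_le_mul (Real.sqrt_le_sqrt h1) (Real.sqrt_le_sqrt h2)
            (Real.sqrt_nonneg _) (Real.sqrt_nonneg _)
      _ = Real.sqrt ((8 / p) * ((M : ℝ) ^ (-p) * T)) := by
          rw [← Real.sqrt_mul (mul_nonneg (le_of_lt (div_pos (by norm_num) hp0))
            (Real.rpow_nonneg hMpos.le _)), mul_assoc]
      _ ≤ Real.sqrt (8 / p) := by
          refine Real.sqrt_le_sqrt ?_
          calc (8 / p) * ((M : ℝ) ^ (-p) * T) ≤ (8 / p) * 1 :=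
                mul_le_mul_of_nonneg_left hMT (le_of_lt (div_pos (by norm_num) hp0))
            _ = 8 / p := mul_one _
  have hAL : 0 ≤ A * Real.sqrt L := mul_nonneg hA0 (Real.sqrt_nonneg _)
  have hs1 : 0 ≤ Real.sqrt (8 * (2 + q)) := Real.sqrt_nonneg _
  have hs2 : 0 ≤ Real.sqrt (8 / p) := Real.sqrt_nonneg _
  calc ∑ k ∈ F₁, ‖c k.1‖ + ∑ k ∈ F₂, ‖c k.1‖
      ≤ Real.sqrt (8 * (2 + q)) * (A * Real.sqrt L) + Real.sqrt (8 / p) :=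
        add_le_add hF1 hF2
    _ ≤ (Real.sqrt (8 * (2 + q)) + Real.sqrt (8 / p) + 1) * (A * Real.sqrt L + 1) := by
        nlinarith [mul_nonneg hs2 hAL]
end

section
/- For every real s > 1 there exists a constant C_s > 0 such that for every c : ℤ² → ℂ with c(0) = 0, every integer N ≥ 1, and with |k| the Euclidean norm of k: Σ_{k ≠ 0} |c(k)| ≤ C_s · ( N^{-(s-1)} · ( Σ_{|k| > N} |k|^{2s} |c(k)|² )^{1/2} + √( log(N + 3) ) · ( Σ_{1 ≤ |k| ≤ N} |k|² |c(k)|² )^{1/2} ), whenever the sums on the right are finite. -/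
open scoped ENNReal

lemma enn_CS {ι : Type*} (f g : ι → ℝ≥0∞) :
    ∑' i, f i * g i ≤ (∑' i, f i ^ (2:ℝ)) ^ ((1:ℝ)/2) * (∑' i, g i ^ (2:ℝ)) ^ ((1:ℝ)/2) := by
  have h22 : (2:ℝ).HolderConjugate 2 := .two_two
  rw [ENNReal.tsum_eq_iSup_sum]
  refine iSup_le fun F => ?_
  refine (ENNReal.inner_le_Lp_mul_Lq F f g h22).trans ?_
  exact mul_le_mul' (ENNReal.rpow_le_rpow (ENNReal.sum_le_tsum F) (by norm_num))
    (ENNReal.rpow_le_rpow (ENNReal.sum_le_tsum F) (by norm_num))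

lemma sum_Ioc_rpow_le (p : ℝ) (hp : 1 < p) (M K : ℕ) (hM : 1 ≤ M) :
    ∑ n ∈ Finset.Ioc M K, ((n:ℝ)) ^ (-p) ≤ (M:ℝ) ^ (1 - p) / (p - 1) := by
  have hM0 : (0:ℝ) < M := by exact_mod_cast hM
  rcases le_or_gt K M with h | h
  · rw [Finset.Ioc_eq_empty (by omega)]
    simp only [Finset.sum_empty]
    exact div_nonneg (Real.rpow_nonneg hM0.le _) (by linarith)
  have hanti : AntitoneOn (fun x : ℝ => x ^ (-p)) (Set.Icc (M:ℝ) ((M:ℝ) + (K - M : ℕ))) := by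
    intro x hx y hy hxy
    exact Real.rpow_le_rpow_of_nonpos (lt_of_lt_of_le hM0 hx.1) hxy (by linarith)
  have key := hanti.sum_le_integral
  have hre : ∑ n ∈ Finset.Ioc M K, ((n:ℝ)) ^ (-p)
      = ∑ i ∈ Finset.range (K - M), ((M:ℝ) + (i + 1 : ℕ)) ^ (-p) := by
    rw [← Finset.Ico_add_one_add_one_eq_Ioc, Finset.sum_Ico_eq_sum_range]
    refine Finset.sum_congr (by congr 1; omega) fun i _ => ?_
    push_cast; ring_nf
  rw [hre]
  refine key.trans ?_
  rw [integral_rpow (Or.inr ⟨by intro hc; linarith, ?_⟩)]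
  · have h1 : ((M:ℝ) + (K - M : ℕ)) ^ (-p + 1) ≥ 0 := by positivity
    have e1 : (((M:ℝ) + (K - M : ℕ)) ^ (-p + 1) - (M:ℝ) ^ (-p + 1)) / (-p + 1)
        = ((M:ℝ) ^ (-p + 1) - ((M:ℝ) + (K - M : ℕ)) ^ (-p + 1)) / (p - 1) := by
      rw [div_eq_div_iff (by linarith) (by linarith)]; ring
    rw [e1, show (1:ℝ) - p = -p + 1 by ring, sub_div]
    have h3 : 0 ≤ ((M:ℝ) + (K - M : ℕ)) ^ (-p + 1) / (p - 1) := div_nonneg h1 (by linarith)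
    linarith
  · intro hmem
    rw [Set.mem_uIcc] at hmem
    have : (0:ℝ) < (M:ℝ) + (K - M : ℕ) := by positivity
    rcases hmem with ⟨h1, _⟩ | ⟨h1, _⟩ <;> linarith

lemma enn_tail (p : ℝ) (hp : 1 < p) (M : ℕ) (hM : 1 ≤ M) :
    (∑' n : ℕ, if M < n then ENNReal.ofReal ((n:ℝ) ^ (-p)) else 0)
      ≤ ENNReal.ofReal ((M:ℝ) ^ (1 - p) / (p - 1)) := by
  classical
  rw [ENNReal.tsum_eq_iSup_sum]
  refine iSup_le fun F => ?_
  set K := F.sup id with hK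
  calc ∑ n ∈ F, (if M < n then ENNReal.ofReal ((n:ℝ)^(-p)) else 0)
      ≤ ∑ n ∈ Finset.Ioc M K, ENNReal.ofReal ((n:ℝ)^(-p)) := by
        rw [← Finset.sum_filter]
        refine Finset.sum_le_sum_of_subset fun n hn => ?_
        simp only [Finset.mem_filter, Finset.mem_Ioc] at hn ⊢
        exact ⟨hn.2, Finset.le_sup (f := id) hn.1⟩
    _ = ENNReal.ofReal (∑ n ∈ Finset.Ioc M K, (n:ℝ)^(-p)) := by
        rw [ENNReal.ofReal_sum_of_nonneg]
        intro i _; positivity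
    _ ≤ _ := ENNReal.ofReal_le_ofReal (sum_Ioc_rpow_le p hp M K hM)

lemma enn_tail' (p : ℝ) (hp : 1 < p) (M : ℕ) :
    (∑' n : ℕ, if M < n then ENNReal.ofReal ((n:ℝ) ^ (-p)) else 0)
      ≤ ENNReal.ofReal (((M:ℝ)+1) ^ (1 - p) * (1 + (p-1)⁻¹)) := by
  have key : ∀ n : ℕ, (if M < n then ENNReal.ofReal ((n:ℝ)^(-p)) else 0)
      ≤ (if n = M+1 then ENNReal.ofReal (((M:ℝ)+1)^(-p)) else 0)
        + (if M+1 < n then ENNReal.ofReal ((n:ℝ)^(-p)) else 0) := by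
    intro n
    by_cases h1 : M + 1 < n
    · have h0 : M < n := by omega
      have h2 : n ≠ M+1 := by omega
      simp [h0, h1, h2]
    by_cases h3 : n = M + 1
    · subst h3
      have hc : ((M+1:ℕ):ℝ) = (M:ℝ)+1 := by push_cast; ring
      simp [h1, hc, Nat.lt_succ_self M]
    · have h0 : ¬ M < n := by omega
      simp [h0, h1, h3]
  calc (∑' n : ℕ, if M < n then ENNReal.ofReal ((n:ℝ)^(-p)) else 0)
      ≤ ∑' n : ℕ, ((if n = M+1 then ENNReal.ofReal (((M:ℝ)+1)^(-p)) else 0)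
        + (if M+1 < n then ENNReal.ofReal ((n:ℝ)^(-p)) else 0)) := ENNReal.tsum_le_tsum key
    _ = ENNReal.ofReal (((M:ℝ)+1)^(-p))
        + ∑' n : ℕ, (if M+1 < n then ENNReal.ofReal ((n:ℝ)^(-p)) else 0) := by
        rw [ENNReal.tsum_add, tsum_ite_eq]
    _ ≤ ENNReal.ofReal (((M:ℝ)+1)^(-p)) + ENNReal.ofReal (((M+1:ℕ):ℝ)^(1-p)/(p-1)) := by
        exact add_le_add_right (enn_tail p hp (M+1) (by omega)) _
    _ ≤ _ := by
        rw [← ENNReal.ofReal_add (by positivity) (div_nonneg (by positivity) (by linarith))]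
        apply ENNReal.ofReal_le_ofReal
        push_cast
        have h1 : ((M:ℝ)+1)^(-p) ≤ ((M:ℝ)+1)^(1-p) :=
          Real.rpow_le_rpow_of_exponent_le (by push_cast; linarith) (by linarith)
        have h2 : (0:ℝ) ≤ ((M:ℝ)+1)^(1-p) := by positivity
        rw [div_eq_mul_inv, mul_add, mul_one]
        linarith

lemma int_fold (g : ℕ → ℝ≥0∞) : (∑' b : ℤ, g b.natAbs) ≤ 2 * ∑' n : ℕ, g n := by
  have key : ∀ b : ℤ, g b.natAbs
      = (if 0 ≤ b then g b.natAbs else 0) + (if b < 0 then g b.natAbs else 0) := by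
    intro b
    rcases le_or_gt 0 b with h | h
    · simp [h, not_lt.2 h]
    · simp [h, not_le.2 h]
  calc (∑' b : ℤ, g b.natAbs)
      = (∑' b : ℤ, if 0 ≤ b then g b.natAbs else 0)
        + (∑' b : ℤ, if b < 0 then g b.natAbs else 0) := by
        rw [← ENNReal.tsum_add]; exact tsum_congr key
    _ ≤ (∑' n : ℕ, g n) + (∑' n : ℕ, g n) := by
        refine add_le_add ?_ ?_
        · rw [← Function.Injective.tsum_eq (f := fun b : ℤ => if 0 ≤ b then g b.natAbs else 0)
            (g := fun n : ℕ => (n:ℤ)) (fun a b h => by simpa using h) ?_]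
          · refine le_of_eq (tsum_congr fun n => ?_)
            simp
          · intro b hb
            have h0 : 0 ≤ b := by
              by_contra h
              simp [h] at hb
            exact ⟨b.toNat, show ((b.toNat:ℕ):ℤ) = b by omega⟩
        · rw [← Function.Injective.tsum_eq (f := fun b : ℤ => if b < 0 then g b.natAbs else 0)
            (g := fun n : ℕ => -((n:ℤ)+1)) (fun a b h => by simpa using h) ?_]
          · refine le_trans (le_of_eq (tsum_congr fun n => ?_))
              (ENNReal.tsum_comp_le_tsum_of_injective Nat.succ_injective g)
            show (if -((n:ℤ)+1) < 0 then g (-((n:ℤ)+1)).natAbs else 0) = g (Nat.succ n)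
            rw [if_pos (by omega), show (-((n:ℤ)+1)).natAbs = Nat.succ n by omega]
          · intro b hb
            have h0 : b < 0 := by
              by_contra h
              simp [h] at hb
            exact ⟨(-b-1).toNat, show -((((-b-1).toNat:ℕ):ℤ)+1) = b by omega⟩
    _ = 2 * ∑' n : ℕ, g n := by rw [two_mul]

lemma enn_count (A : ℕ) (c : ℝ≥0∞) :
    (∑' b : ℤ, if b.natAbs ≤ A then c else 0) ≤ (2*A+1 : ℕ) * c := by
  classical
  have hz : ∀ b : ℤ, b ∉ Finset.Icc (-(A:ℤ)) (A:ℤ) → (if b.natAbs ≤ A then c else 0) = 0 := by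
    intro b hb
    rw [if_neg]
    intro h
    exact hb (by simp only [Finset.mem_Icc]; omega)
  rw [tsum_eq_sum hz]
  calc ∑ b ∈ Finset.Icc (-(A:ℤ)) (A:ℤ), (if b.natAbs ≤ A then c else 0)
      ≤ ∑ _b ∈ Finset.Icc (-(A:ℤ)) (A:ℤ), c :=
        Finset.sum_le_sum fun b _ => by split <;> simp
    _ = ((Finset.Icc (-(A:ℤ)) (A:ℤ)).card : ℕ) • c := by rw [Finset.sum_const]
    _ = (2*A+1 : ℕ) * c := by
        rw [Int.card_Icc, nsmul_eq_mul]
        congr 1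
        norm_cast
        omega

lemma rpow_natAbs_sq (a : ℤ) : ((a:ℝ))^2 = ((a.natAbs:ℝ))^2 := by
  rw [Nat.cast_natAbs, Int.cast_abs, sq_abs]

lemma enn_row (t : ℝ) (ht : 1 ≤ t) (a : ℤ) (ha : a ≠ 0) :
    (∑' b : ℤ, ENNReal.ofReal (((a:ℝ)^2 + (b:ℝ)^2) ^ (-t)))
      ≤ ENNReal.ofReal (5 * (a.natAbs : ℝ) ^ (1 - 2*t)) := by
  set A : ℝ := (a.natAbs : ℝ) with hAdef
  have hA : 1 ≤ A := by
    have h : 1 ≤ a.natAbs := by omega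
    rw [hAdef]
    exact_mod_cast h
  have hA0 : (0:ℝ) < A := by linarith
  have hsq : (a:ℝ)^2 = A^2 := rpow_natAbs_sq a
  have key : ∀ b : ℤ, ENNReal.ofReal (((a:ℝ)^2 + (b:ℝ)^2) ^ (-t))
      ≤ (if b.natAbs ≤ a.natAbs then ENNReal.ofReal (A ^ (-(2*t))) else 0)
        + (if a.natAbs < b.natAbs then
            ENNReal.ofReal (A^(2-2*t)) * ENNReal.ofReal (((b.natAbs:ℝ))^(-(2:ℝ))) else 0) := by
    intro b
    set B : ℝ := (b.natAbs : ℝ) with hBdef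
    have hB0 : (0:ℝ) ≤ B := by positivity
    have hbsq : (b:ℝ)^2 = B^2 := rpow_natAbs_sq b
    rcases le_or_gt b.natAbs a.natAbs with h | h
    · rw [if_pos h, if_neg (by omega)]
      rw [add_zero]
      apply ENNReal.ofReal_le_ofReal
      have e1 : A ^ (-(2*t)) = (A^2) ^ (-t) := by
        rw [show -(2*t) = (2:ℕ) * (-t) by push_cast; ring, Real.rpow_natCast_mul hA0.le]
      rw [e1]
      apply Real.rpow_le_rpow_of_nonpos (by positivity) (by nlinarith) (by linarith)
    · rw [if_neg (by omega), if_pos h, zero_add]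
      have hB1 : 1 ≤ B := by
        have hx : 1 ≤ b.natAbs := by omega
        rw [hBdef]
        exact_mod_cast hx
      have hAB : A ≤ B := by
        rw [hAdef, hBdef]
        exact_mod_cast h.le
      rw [← ENNReal.ofReal_mul (by positivity)]
      apply ENNReal.ofReal_le_ofReal
      have e1 : ((a:ℝ)^2 + (b:ℝ)^2) ^ (-t) ≤ (B^2) ^ (-t) := by
        apply Real.rpow_le_rpow_of_nonpos (by positivity) (by nlinarith) (by linarith)
      have e2 : (B^2) ^ (-t) = B ^ (-(2*t)) := by
        rw [show -(2*t) = (2:ℕ) * (-t) by push_cast; ring, Real.rpow_natCast_mul (by linarith)]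
      have e3 : B ^ (-(2*t)) = B ^ (2-2*t) * B ^ (-(2:ℝ)) := by
        rw [← Real.rpow_add (by linarith)]
        ring_nf
      have e4 : B ^ (2-2*t) ≤ A ^ (2-2*t) :=
        Real.rpow_le_rpow_of_nonpos hA0 hAB (by linarith)
      have e5 : (0:ℝ) ≤ B ^ (-(2:ℝ)) := by positivity
      calc ((a:ℝ)^2 + (b:ℝ)^2) ^ (-t) ≤ B ^ (2-2*t) * B ^ (-(2:ℝ)) := by
            rw [← e3, ← e2]; exact e1
        _ ≤ A ^ (2-2*t) * B ^ (-(2:ℝ)) := by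
            apply mul_le_mul_of_nonneg_right e4 e5
  calc (∑' b : ℤ, ENNReal.ofReal (((a:ℝ)^2 + (b:ℝ)^2) ^ (-t)))
      ≤ (∑' b : ℤ, if b.natAbs ≤ a.natAbs then ENNReal.ofReal (A ^ (-(2*t))) else 0)
        + ∑' b : ℤ, (if a.natAbs < b.natAbs then
            ENNReal.ofReal (A^(2-2*t)) * ENNReal.ofReal (((b.natAbs:ℝ))^(-(2:ℝ))) else 0) := by
        rw [← ENNReal.tsum_add]
        exact ENNReal.tsum_le_tsum key
    _ ≤ (2*a.natAbs+1 : ℕ) * ENNReal.ofReal (A ^ (-(2*t)))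
        + ENNReal.ofReal (A^(2-2*t)) * (2 * ENNReal.ofReal ((A ^ ((1:ℝ)-2)/((2:ℝ)-1)))) := by
        refine add_le_add (enn_count a.natAbs _) ?_
        have e6 : ∀ b : ℤ, (if a.natAbs < b.natAbs then
            ENNReal.ofReal (A^(2-2*t)) * ENNReal.ofReal (((b.natAbs:ℝ))^(-(2:ℝ))) else 0)
            = ENNReal.ofReal (A^(2-2*t)) *
              (if a.natAbs < b.natAbs then ENNReal.ofReal (((b.natAbs:ℝ))^(-(2:ℝ))) else 0) := by
          intro b; split <;> simp
        rw [tsum_congr e6, ENNReal.tsum_mul_left]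
        refine mul_le_mul_right ?_ _
        refine le_trans (int_fold
          (fun n => if a.natAbs < n then ENNReal.ofReal ((n:ℝ)^(-(2:ℝ))) else 0)) ?_
        refine mul_le_mul_right ?_ _
        exact enn_tail 2 one_lt_two a.natAbs (by omega)
    _ ≤ _ := by
        have n1 : (0:ℝ) ≤ ((2*a.natAbs+1 : ℕ):ℝ) := by positivity
        have n2 : (0:ℝ) ≤ (2:ℝ) := by norm_num
        have n3 : (0:ℝ) ≤ A ^ (2-2*t) := by positivity
        have n4 : (0:ℝ) ≤ ((2*a.natAbs+1 : ℕ):ℝ) * A ^ (-(2*t)) := by positivity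
        have n5 : (0:ℝ) ≤ A ^ (2-2*t) * (2 * (A ^ ((1:ℝ)-2)/((2:ℝ)-1))) := by positivity
        rw [show ((2*a.natAbs+1 : ℕ) : ℝ≥0∞) = ENNReal.ofReal ((2*a.natAbs+1 : ℕ):ℝ) by
              rw [ENNReal.ofReal_natCast],
            show (2:ℝ≥0∞) = ENNReal.ofReal (2:ℝ) by norm_num,
            ← ENNReal.ofReal_mul n2,
            ← ENNReal.ofReal_mul n1, ← ENNReal.ofReal_mul n3,
            ← ENNReal.ofReal_add n4 n5]
        apply ENNReal.ofReal_le_ofReal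
        have c1 : ((2*a.natAbs+1 : ℕ):ℝ) = 2*A+1 := by push_cast; ring
        have k1 : A ^ (1 - 2*t) = A * A ^ (-(2*t)) := by
          rw [show (1:ℝ) - 2*t = 1 + (-(2*t)) by ring, Real.rpow_add hA0, Real.rpow_one]
        have k2 : A ^ (2 - 2*t) * (A ^ ((1:ℝ)-2) / ((2:ℝ)-1)) = A ^ (1-2*t) := by
          rw [show ((1:ℝ)-2) = -1 by norm_num, show ((2:ℝ)-1) = 1 by norm_num, div_one,
            ← Real.rpow_add hA0]
          congr 1
          ring
        have k3 : A ^ (-(2*t)) ≤ A ^ (1-2*t) :=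
          Real.rpow_le_rpow_of_exponent_le hA (by linarith)
        have k4 : (0:ℝ) ≤ A ^ (-(2*t)) := by positivity
        rw [c1]
        nlinarith [k1, k2, k3, k4]

lemma enn_col (t : ℝ) (ht : 1 < t) (M : ℕ) :
    (∑' a : ℤ, if M < a.natAbs then ENNReal.ofReal (5 * (a.natAbs:ℝ)^(1-2*t)) else 0)
      ≤ ENNReal.ofReal (10 * (((M:ℝ)+1)^(2-2*t) * (1 + (2*t-2)⁻¹))) := by
  refine le_trans (int_fold (fun n => if M < n then ENNReal.ofReal (5*(n:ℝ)^(1-2*t)) else 0)) ?_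
  have h5 : ∀ n:ℕ, (if M < n then ENNReal.ofReal (5*(n:ℝ)^(1-2*t)) else 0)
      = ENNReal.ofReal 5 * (if M < n then ENNReal.ofReal ((n:ℝ)^(-(2*t-1))) else 0) := by
    intro n
    split
    · rw [← ENNReal.ofReal_mul (by norm_num)]
      congr 2
      ring_nf
    · simp
  rw [tsum_congr h5, ENNReal.tsum_mul_left]
  have htail := enn_tail' (2*t-1) (by linarith) M
  calc 2 * (ENNReal.ofReal 5 * ∑' n:ℕ, (if M < n then ENNReal.ofReal ((n:ℝ)^(-(2*t-1))) else 0))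
      ≤ 2 * (ENNReal.ofReal 5 *
          ENNReal.ofReal (((M:ℝ)+1)^(1-(2*t-1)) * (1 + (2*t-1-1)⁻¹))) := by
        exact mul_le_mul_right (mul_le_mul_right htail _) _
    _ ≤ _ := by
        rw [show (2:ℝ≥0∞) = ENNReal.ofReal (2:ℝ) by norm_num,
            ← ENNReal.ofReal_mul (by norm_num), ← ENNReal.ofReal_mul (by norm_num)]
        apply ENNReal.ofReal_le_ofReal
        rw [show (1:ℝ)-(2*t-1) = 2-2*t by ring, show 2*t-1-1 = 2*t-2 by ring]
        apply le_of_eq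
        ring

lemma natAbs_cast_sq (a : ℤ) : ((a.natAbs:ℤ))^2 = a^2 := by
  rw [Nat.cast_natAbs]
  exact sq_abs a

lemma natAbs_le_of_sq_le {a N : ℤ} (hN : 1 ≤ N) (h : (a:ℝ)^2 ≤ (N:ℝ)^2) :
    a.natAbs ≤ N.toNat := by
  have hz : a^2 ≤ N^2 := by exact_mod_cast h
  have h2 : (a.natAbs)^2 ≤ (N.toNat)^2 := by
    have e1 : ((a.natAbs : ℤ))^2 = a^2 := natAbs_cast_sq a
    have e2 : ((N.toNat : ℤ))^2 = N^2 := by rw [Int.toNat_of_nonneg (by omega)]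
    have h3 : ((a.natAbs:ℤ))^2 ≤ ((N.toNat:ℤ))^2 := by rw [e1, e2]; exact hz
    exact_mod_cast h3
  by_contra hc
  push_neg at hc
  have := Nat.pow_lt_pow_left hc (two_ne_zero)
  omega

lemma high_weight (s : ℝ) (hs : 1 < s) (N : ℤ) (hN : 1 ≤ N) :
    (∑' k : {k : ℤ × ℤ // (N : ℝ) ^ 2 < latNormSq k}, ENNReal.ofReal (((latNormSq k.1)^s)⁻¹))
      ≤ ENNReal.ofReal ((20*(1+(2*s-2)⁻¹)*(4:ℝ)^s) * (N:ℝ)^(2-2*s)) := by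
  have hN0 : (0:ℝ) < (N:ℝ) := by exact_mod_cast hN
  set M : ℕ := N.toNat / 2 with hMdef
  set F1 : ℤ × ℤ → ℝ≥0∞ := fun k =>
    if (N:ℝ)^2 < 2*((k.1:ℝ))^2 then ENNReal.ofReal ((((k.1:ℝ))^2+((k.2:ℝ))^2) ^ (-s)) else 0
    with hF1
  set F2 : ℤ × ℤ → ℝ≥0∞ := fun k =>
    if (N:ℝ)^2 < 2*((k.2:ℝ))^2 then ENNReal.ofReal ((((k.1:ℝ))^2+((k.2:ℝ))^2) ^ (-s)) else 0
    with hF2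
  have colbound : (∑' k : ℤ × ℤ, F1 k)
      ≤ ENNReal.ofReal (10 * (((M:ℝ)+1)^(2-2*s) * (1 + (2*s-2)⁻¹))) := by
    rw [ENNReal.tsum_prod']
    refine le_trans (ENNReal.tsum_le_tsum (fun a => ?_)) (enn_col s hs M)
    show (∑' b : ℤ, F1 (a, b)) ≤ _
    by_cases h : (N:ℝ)^2 < 2*((a:ℝ))^2
    · have ha : a ≠ 0 := by
        rintro rfl
        simp only [Int.cast_zero] at h
        nlinarith
      have hMlt : M < a.natAbs := by
        have hz : N^2 < 2*a^2 := by exact_mod_cast h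
        have e1 : ((a.natAbs : ℤ))^2 = a^2 := natAbs_cast_sq a
        have e2 : ((N.toNat : ℤ))^2 = N^2 := by rw [Int.toNat_of_nonneg (by omega)]
        have h2 : ((N.toNat:ℤ))^2 < (2*((a.natAbs:ℤ)))^2 := by nlinarith
        have h3 : (N.toNat:ℤ) < 2*((a.natAbs:ℤ)) := by
          by_contra hc
          push_neg at hc
          have hnn : (0:ℤ) ≤ 2*((a.natAbs:ℤ)) := by positivity
          nlinarith
        have h4 : N.toNat < 2*a.natAbs := by exact_mod_cast h3
        omega
      have : (∑' b : ℤ, F1 (a, b)) = ∑' b : ℤ, ENNReal.ofReal ((((a:ℝ))^2+((b:ℝ))^2) ^ (-s)) := by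
        refine tsum_congr fun b => ?_
        simp only [hF1, if_pos h]
      rw [this, if_pos hMlt]
      exact enn_row s hs.le a ha
    · have : (∑' b : ℤ, F1 (a, b)) = 0 := by
        refine ENNReal.summable.tsum_eq_zero_iff.mpr fun b => by simp [hF1, h]
      rw [this]
      exact zero_le
  have hswap : (∑' k : ℤ × ℤ, F2 k) = ∑' k : ℤ × ℤ, F1 k := by
    rw [← (Equiv.prodComm ℤ ℤ).tsum_eq F2]
    refine tsum_congr fun k => ?_
    simp only [hF1, hF2, Equiv.prodComm_apply, Prod.snd_swap, Prod.fst_swap]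
    rw [add_comm (((k.2:ℝ))^2)]
  have split : (∑' k : {k : ℤ × ℤ // (N : ℝ) ^ 2 < latNormSq k},
        ENNReal.ofReal (((latNormSq k.1)^s)⁻¹))
      ≤ (∑' k : ℤ × ℤ, F1 k) + (∑' k : ℤ × ℤ, F2 k) := by
    refine le_trans (le_of_eq (tsum_subtype {k : ℤ×ℤ | (N:ℝ)^2 < latNormSq k}
      (fun k => ENNReal.ofReal (((latNormSq k)^s)⁻¹)))) ?_
    rw [← ENNReal.tsum_add]
    refine ENNReal.tsum_le_tsum fun k => ?_
    by_cases hk : (N:ℝ)^2 < latNormSq k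
    · rw [Set.indicator_of_mem (by exact hk)]
      have hval : ENNReal.ofReal (((latNormSq k)^s)⁻¹)
          = ENNReal.ofReal ((((k.1:ℝ))^2+((k.2:ℝ))^2) ^ (-s)) := by
        rw [Real.rpow_neg]
        · rfl
        · have : (0:ℝ) ≤ latNormSq k := by
            unfold latNormSq; positivity
          exact this
      rw [hval]
      have hlat : latNormSq k = ((k.1:ℝ))^2+((k.2:ℝ))^2 := rfl
      rcases le_total (((k.1:ℝ))^2) (((k.2:ℝ))^2) with hle | hle
      · have h2 : (N:ℝ)^2 < 2*((k.2:ℝ))^2 := by rw [hlat] at hk; nlinarith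
        calc ENNReal.ofReal ((((k.1:ℝ))^2+((k.2:ℝ))^2) ^ (-s)) = F2 k := by
              simp only [hF2, if_pos h2]
          _ ≤ F1 k + F2 k := le_add_self
      · have h2 : (N:ℝ)^2 < 2*((k.1:ℝ))^2 := by rw [hlat] at hk; nlinarith
        calc ENNReal.ofReal ((((k.1:ℝ))^2+((k.2:ℝ))^2) ^ (-s)) = F1 k := by
              simp only [hF1, if_pos h2]
          _ ≤ F1 k + F2 k := le_self_add
    · rw [Set.indicator_of_notMem (by exact hk)]
      exact zero_le
  refine split.trans ?_
  rw [hswap, ← two_mul]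
  refine le_trans (mul_le_mul_right colbound 2) ?_
  rw [show (2:ℝ≥0∞) = ENNReal.ofReal (2:ℝ) by norm_num, ← ENNReal.ofReal_mul (by norm_num)]
  apply ENNReal.ofReal_le_ofReal
  have hs2 : (0:ℝ) < 2*s - 2 := by linarith
  have hinv : (0:ℝ) ≤ 1 + (2*s-2)⁻¹ := by positivity
  have hMN : (N:ℝ)/2 ≤ (M:ℝ)+1 := by
    have h1 : N.toNat ≤ 2*(M+1) := by omega
    have h2 : ((N.toNat:ℕ):ℝ) = (N:ℝ) := by
      rw [show ((N.toNat:ℕ):ℝ) = ((N.toNat:ℤ):ℝ) by push_cast; ring,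
        Int.toNat_of_nonneg (by omega)]
    have h3 : ((N.toNat:ℕ):ℝ) ≤ 2*((M:ℝ)+1) := by exact_mod_cast h1
    rw [h2] at h3
    linarith
  have key : ((M:ℝ)+1)^(2-2*s) ≤ (4:ℝ)^s * (N:ℝ)^(2-2*s) := by
    have e1 : ((M:ℝ)+1)^(2-2*s) ≤ ((N:ℝ)/2)^(2-2*s) :=
      Real.rpow_le_rpow_of_nonpos (by linarith) hMN (by linarith)
    have e2 : ((N:ℝ)/2)^(2-2*s) = (N:ℝ)^(2-2*s) / (2:ℝ)^(2-2*s) :=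
      Real.div_rpow hN0.le (by norm_num : (0:ℝ) ≤ 2) _
    have e3 : (N:ℝ)^(2-2*s) / (2:ℝ)^(2-2*s) = (N:ℝ)^(2-2*s) * (2:ℝ)^(2*s-2) := by
      rw [show (2:ℝ)*s-2 = -(2-2*s) by ring, Real.rpow_neg (by norm_num), div_eq_mul_inv]
    have e4 : (2:ℝ)^(2*s-2) ≤ (2:ℝ)^(2*s) :=
      Real.rpow_le_rpow_of_exponent_le (by norm_num) (by linarith)
    have e5 : (4:ℝ)^s = (2:ℝ)^(2*s) := by
      rw [show (4:ℝ) = (2:ℝ)^(2:ℕ) by norm_num, ← Real.rpow_natCast (2:ℝ) 2,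
        ← Real.rpow_mul (by norm_num)]
      norm_num
    have e6 : (0:ℝ) ≤ (N:ℝ)^(2-2*s) := Real.rpow_nonneg hN0.le _
    calc ((M:ℝ)+1)^(2-2*s) ≤ (N:ℝ)^(2-2*s) * (2:ℝ)^(2*s-2) := by rw [← e3, ← e2]; exact e1
      _ ≤ (N:ℝ)^(2-2*s) * (2:ℝ)^(2*s) := by nlinarith
      _ = (4:ℝ)^s * (N:ℝ)^(2-2*s) := by rw [e5]; ring
  calc (2:ℝ) * (10 * (((M:ℝ)+1)^(2-2*s) * (1 + (2*s-2)⁻¹)))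
      = 20 * (1 + (2*s-2)⁻¹) * ((M:ℝ)+1)^(2-2*s) := by ring
    _ ≤ 20 * (1 + (2*s-2)⁻¹) * ((4:ℝ)^s * (N:ℝ)^(2-2*s)) := by
        refine mul_le_mul_of_nonneg_left key (by positivity)
    _ = 20*(1+(2*s-2)⁻¹)*(4:ℝ)^s * (N:ℝ)^(2-2*s) := by ring

lemma rpow_natAbs_sq'' (a : ℤ) : ((a:ℝ))^2 = ((a.natAbs:ℝ))^2 := by
  rw [Nat.cast_natAbs, Int.cast_abs, sq_abs]

lemma low_weight (N : ℤ) (hN : 1 ≤ N) :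
    (∑' k : {k : ℤ × ℤ // k ≠ 0 ∧ latNormSq k ≤ (N : ℝ) ^ 2},
        ENNReal.ofReal ((latNormSq k.1)⁻¹))
      ≤ ENNReal.ofReal (50 * Real.log ((N:ℝ)+3)) := by
  have hN0 : (0:ℝ) < (N:ℝ) := by exact_mod_cast hN
  have hN1 : (1:ℝ) ≤ (N:ℝ) := by exact_mod_cast hN
  have hlogpos : (0:ℝ) ≤ Real.log (N:ℝ) := Real.log_nonneg (by exact_mod_cast hN)
  set Nt : ℕ := N.toNat with hNt
  set G1 : ℤ × ℤ → ℝ≥0∞ := fun k =>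
    if 0 < k.1.natAbs ∧ k.1.natAbs ≤ Nt then
      ENNReal.ofReal ((((k.1:ℝ))^2+((k.2:ℝ))^2) ^ (-(1:ℝ))) else 0 with hG1
  set G2 : ℤ × ℤ → ℝ≥0∞ := fun k =>
    if k.1 = 0 ∧ k.2 ≠ 0 then ENNReal.ofReal ((((k.2:ℝ))^2) ^ (-(1:ℝ))) else 0 with hG2
  -- pointwise split
  have split : (∑' k : {k : ℤ × ℤ // k ≠ 0 ∧ latNormSq k ≤ (N : ℝ) ^ 2},
        ENNReal.ofReal ((latNormSq k.1)⁻¹))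
      ≤ (∑' k : ℤ × ℤ, G1 k) + (∑' k : ℤ × ℤ, G2 k) := by
    refine le_trans (le_of_eq (tsum_subtype {k : ℤ×ℤ | k ≠ 0 ∧ latNormSq k ≤ (N:ℝ)^2}
      (fun k => ENNReal.ofReal ((latNormSq k)⁻¹)))) ?_
    rw [← ENNReal.tsum_add]
    refine ENNReal.tsum_le_tsum fun k => ?_
    by_cases hk : k ≠ 0 ∧ latNormSq k ≤ (N:ℝ)^2
    · rw [Set.indicator_of_mem (by exact hk)]
      have hlat : latNormSq k = ((k.1:ℝ))^2+((k.2:ℝ))^2 := rfl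
      by_cases h1 : k.1 = 0
      · have h2 : k.2 ≠ 0 := by
          intro h2
          exact hk.1 (Prod.ext h1 h2)
        have hval : ENNReal.ofReal ((latNormSq k)⁻¹)
            = ENNReal.ofReal ((((k.2:ℝ))^2) ^ (-(1:ℝ))) := by
          rw [Real.rpow_neg_one, hlat, h1]
          norm_num
        rw [hval]
        calc _ = G2 k := by simp only [hG2, if_pos (And.intro h1 h2)]
          _ ≤ G1 k + G2 k := le_add_self
      · have hcond : 0 < k.1.natAbs ∧ k.1.natAbs ≤ Nt := by
          constructor
          · omega
          · refine natAbs_le_of_sq_le hN ?_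
            have h3 : (0:ℝ) ≤ ((k.2:ℝ))^2 := sq_nonneg _
            rw [hlat] at hk
            linarith [hk.2]
        have hval : ENNReal.ofReal ((latNormSq k)⁻¹)
            = ENNReal.ofReal ((((k.1:ℝ))^2+((k.2:ℝ))^2) ^ (-(1:ℝ))) := by
          rw [Real.rpow_neg_one, hlat]
        rw [hval]
        calc _ = G1 k := by simp only [hG1, if_pos hcond]
          _ ≤ G1 k + G2 k := le_self_add
    · rw [Set.indicator_of_notMem (by exact hk)]
      exact zero_le
  have hG1bound : (∑' k : ℤ × ℤ, G1 k) ≤ ENNReal.ofReal (10 * (1 + Real.log (N:ℝ))) := by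
    rw [ENNReal.tsum_prod']
    have inner : ∀ a : ℤ, (∑' b : ℤ, G1 (a, b))
        ≤ (fun n : ℕ => if 0 < n ∧ n ≤ Nt then ENNReal.ofReal (5 * (n:ℝ)^(1-2*(1:ℝ))) else 0)
            a.natAbs := by
      intro a
      by_cases h : 0 < a.natAbs ∧ a.natAbs ≤ Nt
      · have ha : a ≠ 0 := by
          intro h0
          rw [h0] at h
          simp at h
        have e : (∑' b : ℤ, G1 (a, b))
            = ∑' b : ℤ, ENNReal.ofReal ((((a:ℝ))^2+((b:ℝ))^2) ^ (-(1:ℝ))) := by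
          refine tsum_congr fun b => ?_
          simp only [hG1, if_pos h]
        rw [e]
        simp only [if_pos h]
        exact enn_row 1 le_rfl a ha
      · have e : (∑' b : ℤ, G1 (a, b)) = 0 :=
          ENNReal.summable.tsum_eq_zero_iff.mpr fun b => by simp only [hG1, if_neg h]
        rw [e]
        simp only [if_neg h]
        exact le_rfl
    refine le_trans (ENNReal.tsum_le_tsum inner) ?_
    refine le_trans (int_fold
      (fun n => if 0 < n ∧ n ≤ Nt then ENNReal.ofReal (5 * (n:ℝ)^(1-2*(1:ℝ))) else 0)) ?_
    have hfin : (∑' n : ℕ, if 0 < n ∧ n ≤ Nt then ENNReal.ofReal (5 * (n:ℝ)^(1-2*(1:ℝ))) else 0)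
        = ∑ n ∈ Finset.Icc 1 Nt, ENNReal.ofReal (5 * (n:ℝ)^(1-2*(1:ℝ))) := by
      rw [tsum_eq_sum (s := Finset.Icc 1 Nt) ?_]
      · refine Finset.sum_congr rfl fun n hn => ?_
        rw [if_pos]
        simp only [Finset.mem_Icc] at hn
        omega
      · intro n hn
        rw [if_neg]
        simp only [Finset.mem_Icc] at hn
        omega
    rw [hfin]
    have hsum : ∑ n ∈ Finset.Icc 1 Nt, ENNReal.ofReal (5 * (n:ℝ)^(1-2*(1:ℝ)))
        = ENNReal.ofReal (∑ n ∈ Finset.Icc 1 Nt, 5 * (n:ℝ)^(1-2*(1:ℝ))) := by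
      rw [ENNReal.ofReal_sum_of_nonneg]
      intro n _
      positivity
    rw [hsum]
    have hharm : ∑ n ∈ Finset.Icc 1 Nt, 5 * (n:ℝ)^(1-2*(1:ℝ)) ≤ 5 * (1 + Real.log (N:ℝ)) := by
      have e : ∀ n ∈ Finset.Icc 1 Nt, 5 * (n:ℝ)^(1-2*(1:ℝ)) = 5 * ((n:ℝ))⁻¹ := by
        intro n hn
        rw [show (1:ℝ)-2*(1:ℝ) = -1 by norm_num, Real.rpow_neg_one]
      rw [Finset.sum_congr rfl e, ← Finset.mul_sum]
      have hh : ∑ n ∈ Finset.Icc 1 Nt, ((n:ℝ))⁻¹ = ((harmonic Nt : ℚ) : ℝ) := by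
        rw [harmonic_eq_sum_Icc]
        push_cast
        rfl
      rw [hh]
      have hlog : ((harmonic Nt : ℚ) : ℝ) ≤ 1 + Real.log Nt := harmonic_le_one_add_log Nt
      have hcast : ((Nt:ℕ):ℝ) = (N:ℝ) := by
        rw [hNt, show ((N.toNat:ℕ):ℝ) = ((N.toNat:ℤ):ℝ) by push_cast; ring,
          Int.toNat_of_nonneg (by omega)]
      rw [hcast] at hlog
      nlinarith [hlogpos]
    calc 2 * ENNReal.ofReal (∑ n ∈ Finset.Icc 1 Nt, 5 * (n:ℝ)^(1-2*(1:ℝ)))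
        ≤ 2 * ENNReal.ofReal (5 * (1 + Real.log (N:ℝ))) :=
          mul_le_mul_right (ENNReal.ofReal_le_ofReal hharm) _
      _ ≤ _ := by
          rw [show (2:ℝ≥0∞) = ENNReal.ofReal (2:ℝ) by norm_num,
            ← ENNReal.ofReal_mul (by norm_num)]
          apply ENNReal.ofReal_le_ofReal
          nlinarith [hlogpos]
  have hG2bound : (∑' k : ℤ × ℤ, G2 k) ≤ ENNReal.ofReal 4 := by
    rw [ENNReal.tsum_prod']
    have inner : ∀ a : ℤ, (∑' b : ℤ, G2 (a, b))
        = if a = 0 then (∑' b : ℤ, if b ≠ 0 then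
            ENNReal.ofReal ((((b:ℝ))^2) ^ (-(1:ℝ))) else 0) else 0 := by
      intro a
      by_cases h : a = 0
      · rw [if_pos h]
        refine tsum_congr fun b => ?_
        by_cases hb : b ≠ 0
        · simp only [hG2, if_pos (And.intro h hb), if_pos hb]
        · simp only [hG2, hb]
          simp
      · rw [if_neg h]
        refine ENNReal.summable.tsum_eq_zero_iff.mpr fun b => ?_
        simp only [hG2]
        rw [if_neg]
        simp [h]
    rw [tsum_congr inner, tsum_ite_eq]
    have hfold : (∑' b : ℤ, if b ≠ 0 then ENNReal.ofReal ((((b:ℝ))^2) ^ (-(1:ℝ))) else 0)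
        ≤ 2 * ∑' n : ℕ, (if 0 < n then ENNReal.ofReal ((n:ℝ) ^ (-(2:ℝ))) else 0) := by
      refine le_trans (le_of_eq (tsum_congr (fun b => ?_)))
        (int_fold (fun n => if 0 < n then ENNReal.ofReal ((n:ℝ) ^ (-(2:ℝ))) else 0))
      by_cases hb : b = 0
      · subst hb
        simp
      · rw [if_pos hb, if_pos (by omega : 0 < b.natAbs)]
        congr 1
        rw [rpow_natAbs_sq'' b,
          show -(2:ℝ) = ((2:ℕ):ℝ) * (-(1:ℝ)) by norm_num,
          Real.rpow_natCast_mul (by positivity)]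
    refine le_trans hfold ?_
    have := enn_tail' 2 one_lt_two 0
    refine le_trans (mul_le_mul_right this _) ?_
    rw [show (2:ℝ≥0∞) = ENNReal.ofReal (2:ℝ) by norm_num, ← ENNReal.ofReal_mul (by norm_num)]
    apply ENNReal.ofReal_le_ofReal
    norm_num
  refine split.trans ?_
  refine le_trans (add_le_add hG1bound hG2bound) ?_
  have hnn : (0:ℝ) ≤ 10 * (1 + Real.log (N:ℝ)) := by nlinarith
  rw [← ENNReal.ofReal_add hnn (by norm_num)]
  apply ENNReal.ofReal_le_ofReal
  have hlogN : Real.log (N:ℝ) ≤ Real.log ((N:ℝ)+3) := by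
    apply Real.log_le_log hN0
    linarith
  have hlog1 : (1:ℝ) ≤ Real.log ((N:ℝ)+3) := by
    rw [Real.le_log_iff_exp_le (by linarith)]
    have h4 : (4:ℝ) ≤ (N:ℝ)+3 := by linarith
    have := Real.exp_one_lt_d9
    linarith
  nlinarith [hlogN, hlog1]

lemma latNormSq_nonneg (k : ℤ × ℤ) : 0 ≤ latNormSq k := by
  unfold latNormSq
  positivity

lemma latNormSq_pos {k : ℤ × ℤ} (h : k ≠ 0) : 0 < latNormSq k := by
  unfold latNormSq
  rcases eq_or_ne k.1 0 with h1 | h1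
  · have h2 : k.2 ≠ 0 := fun h2 => h (Prod.ext h1 h2)
    have h2' : ((k.2:ℝ)) ≠ 0 := Int.cast_ne_zero.mpr h2
    have h3 : 0 < ((k.2:ℝ))^2 := lt_of_le_of_ne (sq_nonneg _) (Ne.symm (pow_ne_zero 2 h2'))
    nlinarith [sq_nonneg ((k.1:ℝ))]
  · have h1' : ((k.1:ℝ)) ≠ 0 := Int.cast_ne_zero.mpr h1
    have h3 : 0 < ((k.1:ℝ))^2 := lt_of_le_of_ne (sq_nonneg _) (Ne.symm (pow_ne_zero 2 h1'))
    nlinarith [sq_nonneg ((k.2:ℝ))]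

lemma cs_apply {ι : Type*} (w F : ι → ℝ) (hw : ∀ i, 0 < w i) (hF : ∀ i, 0 ≤ F i) :
    (∑' i, ENNReal.ofReal (F i))
      ≤ (∑' i, ENNReal.ofReal ((w i)⁻¹)) ^ ((1:ℝ)/2)
        * (∑' i, ENNReal.ofReal (w i * (F i)^2)) ^ ((1:ℝ)/2) := by
  have key : ∀ i, ENNReal.ofReal (F i)
      = ENNReal.ofReal ((w i) ^ (-(1:ℝ)/2)) * ENNReal.ofReal ((w i) ^ ((1:ℝ)/2) * F i) := by
    intro i
    rw [← ENNReal.ofReal_mul (Real.rpow_nonneg (hw i).le _)]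
    congr 1
    rw [← mul_assoc, ← Real.rpow_add (hw i)]
    norm_num
  rw [tsum_congr key]
  refine le_trans (enn_CS _ _) ?_
  have e1 : ∀ i, (ENNReal.ofReal ((w i) ^ (-(1:ℝ)/2))) ^ (2:ℝ) = ENNReal.ofReal ((w i)⁻¹) := by
    intro i
    rw [ENNReal.ofReal_rpow_of_nonneg (Real.rpow_nonneg (hw i).le _) (by norm_num)]
    congr 1
    rw [← Real.rpow_mul (hw i).le, show (-(1:ℝ)/2)*2 = -1 by norm_num, Real.rpow_neg_one]
  have e2 : ∀ i, (ENNReal.ofReal ((w i) ^ ((1:ℝ)/2) * F i)) ^ (2:ℝ)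
      = ENNReal.ofReal (w i * (F i)^2) := by
    intro i
    rw [ENNReal.ofReal_rpow_of_nonneg
      (mul_nonneg (Real.rpow_nonneg (hw i).le _) (hF i)) (by norm_num)]
    congr 1
    rw [Real.mul_rpow (Real.rpow_nonneg (hw i).le _) (hF i), ← Real.rpow_mul (hw i).le,
      show ((1:ℝ)/2)*2 = 1 by norm_num, Real.rpow_one,
      show (2:ℝ) = ((2:ℕ):ℝ) by norm_num, Real.rpow_natCast]
  rw [tsum_congr e1, tsum_congr e2]

/-- Frequency-split ℓ¹ estimate for Fourier coefficients of a mean-zero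
function: Σ_{k≠0} |c(k)| ≤ C_s ( N^{-(s-1)} (Σ_{|k|>N} |k|^{2s}|c(k)|²)^{1/2}
+ √(log(N+3)) (Σ_{1≤|k|≤N} |k|²|c(k)|²)^{1/2} ). -/
theorem frequency_split_l1 (s : ℝ) (hs : 1 < s) :
    ∃ C : ℝ, 0 < C ∧
      ∀ (c : ℤ × ℤ → ℂ), c 0 = 0 → ∀ (N : ℤ), 1 ≤ N →
        (Summable fun k : {k : ℤ × ℤ // (N : ℝ) ^ 2 < latNormSq k} =>
          (latNormSq k.1) ^ s * ‖c k.1‖ ^ 2) →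
        (Summable fun k : {k : ℤ × ℤ // k ≠ 0 ∧ latNormSq k ≤ (N : ℝ) ^ 2} =>
          latNormSq k.1 * ‖c k.1‖ ^ 2) →
        (∑' k : {k : ℤ × ℤ // k ≠ 0}, ENNReal.ofReal ‖c k.1‖) ≤
          ENNReal.ofReal
            (C * ((N : ℝ) ^ (-(s - 1)) *
                Real.sqrt (∑' k : {k : ℤ × ℤ // (N : ℝ) ^ 2 < latNormSq k},
                  (latNormSq k.1) ^ s * ‖c k.1‖ ^ 2) +
              Real.sqrt (Real.log ((N : ℝ) + 3)) *
                Real.sqrt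
                  (∑' k : {k : ℤ × ℤ // k ≠ 0 ∧ latNormSq k ≤ (N : ℝ) ^ 2},
                    latNormSq k.1 * ‖c k.1‖ ^ 2))) := by

  have hs2 : (0:ℝ) < 2*s - 2 := by linarith
  set C1 : ℝ := 20*(1+(2*s-2)⁻¹)*(4:ℝ)^s with hC1
  have hinv : (0:ℝ) < 1 + (2*s-2)⁻¹ := by
    have := inv_pos.mpr hs2
    linarith
  have hC1pos : 0 < C1 := by
    refine mul_pos (mul_pos (by norm_num) hinv) (Real.rpow_pos_of_pos (by norm_num) s)
  refine ⟨Real.sqrt C1 + Real.sqrt 50 + 1, by positivity, ?_⟩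
  intro c hc0 N hN h1 h2
  have hN0R : (0:ℝ) < (N:ℝ) := by exact_mod_cast hN
  set X : ℝ := ∑' k : {k : ℤ × ℤ // (N : ℝ) ^ 2 < latNormSq k},
    (latNormSq k.1) ^ s * ‖c k.1‖ ^ 2 with hX
  set Y : ℝ := ∑' k : {k : ℤ × ℤ // k ≠ 0 ∧ latNormSq k ≤ (N : ℝ) ^ 2},
    latNormSq k.1 * ‖c k.1‖ ^ 2 with hY
  have hXnn : 0 ≤ X := tsum_nonneg fun k =>
    mul_nonneg (Real.rpow_nonneg (latNormSq_nonneg _) s) (by positivity)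
  have hYnn : 0 ≤ Y := tsum_nonneg fun k => mul_nonneg (latNormSq_pos k.2.1).le (by positivity)
  -- split
  have hsplit : (∑' k : {k : ℤ × ℤ // k ≠ 0}, ENNReal.ofReal ‖c k.1‖)
      ≤ (∑' k : {k : ℤ × ℤ // (N : ℝ) ^ 2 < latNormSq k}, ENNReal.ofReal ‖c k.1‖)
        + (∑' k : {k : ℤ × ℤ // k ≠ 0 ∧ latNormSq k ≤ (N : ℝ) ^ 2},
            ENNReal.ofReal ‖c k.1‖) := by
    have e0 : (∑' k : {k : ℤ × ℤ // k ≠ 0}, ENNReal.ofReal ‖c k.1‖)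
        = ∑' k : ℤ × ℤ, Set.indicator {k : ℤ × ℤ | k ≠ 0}
            (fun k => ENNReal.ofReal ‖c k‖) k :=
      tsum_subtype {k : ℤ × ℤ | k ≠ 0} (fun k => ENNReal.ofReal ‖c k‖)
    have eA : (∑' k : {k : ℤ × ℤ // (N : ℝ) ^ 2 < latNormSq k}, ENNReal.ofReal ‖c k.1‖)
        = ∑' k : ℤ × ℤ, Set.indicator {k : ℤ × ℤ | (N : ℝ) ^ 2 < latNormSq k}
            (fun k => ENNReal.ofReal ‖c k‖) k :=
      tsum_subtype {k : ℤ × ℤ | (N : ℝ) ^ 2 < latNormSq k} (fun k => ENNReal.ofReal ‖c k‖)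
    have eB : (∑' k : {k : ℤ × ℤ // k ≠ 0 ∧ latNormSq k ≤ (N : ℝ) ^ 2},
          ENNReal.ofReal ‖c k.1‖)
        = ∑' k : ℤ × ℤ, Set.indicator {k : ℤ × ℤ | k ≠ 0 ∧ latNormSq k ≤ (N : ℝ) ^ 2}
            (fun k => ENNReal.ofReal ‖c k‖) k :=
      tsum_subtype {k : ℤ × ℤ | k ≠ 0 ∧ latNormSq k ≤ (N : ℝ) ^ 2}
        (fun k => ENNReal.ofReal ‖c k‖)
    rw [e0, eA, eB, ← ENNReal.tsum_add]
    refine ENNReal.tsum_le_tsum fun k => ?_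
    by_cases hk : k = 0
    · rw [Set.indicator_of_notMem (by simp [hk])]
      exact zero_le
    · rw [Set.indicator_of_mem (by exact hk)]
      rcases lt_or_ge ((N:ℝ)^2) (latNormSq k) with hkk | hkk
      · rw [Set.indicator_of_mem (by exact hkk)]
        exact le_self_add
      · rw [Set.indicator_of_mem (s := {k : ℤ × ℤ | k ≠ 0 ∧ latNormSq k ≤ (N : ℝ) ^ 2})
          (by exact ⟨hk, hkk⟩)]
        exact le_add_self
  refine hsplit.trans ?_
  -- high part
  have highCS := cs_apply (fun k : {k : ℤ × ℤ // (N : ℝ) ^ 2 < latNormSq k} =>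
      (latNormSq k.1)^s) (fun k => ‖c k.1‖)
    (fun k => Real.rpow_pos_of_pos (by nlinarith [k.2, sq_nonneg ((N:ℝ))]) s)
    (fun k => norm_nonneg _)
  have highF2 : (∑' k : {k : ℤ × ℤ // (N : ℝ) ^ 2 < latNormSq k},
      ENNReal.ofReal ((latNormSq k.1)^s * ‖c k.1‖^2)) = ENNReal.ofReal X :=
    (ENNReal.ofReal_tsum_of_nonneg (fun k =>
      mul_nonneg (Real.rpow_nonneg (latNormSq_nonneg _) s) (by positivity)) h1).symm
  have highbound : (∑' k : {k : ℤ × ℤ // (N : ℝ) ^ 2 < latNormSq k}, ENNReal.ofReal ‖c k.1‖)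
      ≤ ENNReal.ofReal (Real.sqrt C1 * (N:ℝ)^(-(s-1)) * Real.sqrt X) := by
    refine highCS.trans ?_
    rw [highF2]
    have f1 : (∑' k : {k : ℤ × ℤ // (N : ℝ) ^ 2 < latNormSq k},
        ENNReal.ofReal (((latNormSq k.1)^s)⁻¹)) ^ ((1:ℝ)/2)
        ≤ (ENNReal.ofReal (C1 * (N:ℝ)^(2-2*s))) ^ ((1:ℝ)/2) :=
      ENNReal.rpow_le_rpow (high_weight s hs N hN) (by norm_num)
    refine le_trans (mul_le_mul' f1 le_rfl) ?_
    have hCN : (0:ℝ) ≤ C1 * (N:ℝ)^(2-2*s) :=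
      mul_nonneg hC1pos.le (Real.rpow_nonneg hN0R.le _)
    rw [ENNReal.ofReal_rpow_of_nonneg hCN (by norm_num),
      ENNReal.ofReal_rpow_of_nonneg hXnn (by norm_num),
      ← ENNReal.ofReal_mul (Real.rpow_nonneg hCN _)]
    apply ENNReal.ofReal_le_ofReal
    have g1 : (C1 * (N:ℝ)^(2-2*s)) ^ ((1:ℝ)/2) = Real.sqrt C1 * (N:ℝ)^(-(s-1)) := by
      rw [← Real.sqrt_eq_rpow, Real.sqrt_mul hC1pos.le, Real.sqrt_eq_rpow ((N:ℝ)^(2-2*s)),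
        ← Real.rpow_mul hN0R.le, show (2-2*s)*((1:ℝ)/2) = -(s-1) by ring]
    have g2 : X ^ ((1:ℝ)/2) = Real.sqrt X := (Real.sqrt_eq_rpow X).symm
    rw [g1, g2]
  -- low part
  have lowCS := cs_apply (fun k : {k : ℤ × ℤ // k ≠ 0 ∧ latNormSq k ≤ (N : ℝ) ^ 2} =>
      latNormSq k.1) (fun k => ‖c k.1‖)
    (fun k => latNormSq_pos k.2.1) (fun k => norm_nonneg _)
  have lowF2 : (∑' k : {k : ℤ × ℤ // k ≠ 0 ∧ latNormSq k ≤ (N : ℝ) ^ 2},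
      ENNReal.ofReal (latNormSq k.1 * ‖c k.1‖^2)) = ENNReal.ofReal Y :=
    (ENNReal.ofReal_tsum_of_nonneg
      (fun k => mul_nonneg (latNormSq_pos k.2.1).le (by positivity)) h2).symm
  have lowbound : (∑' k : {k : ℤ × ℤ // k ≠ 0 ∧ latNormSq k ≤ (N : ℝ) ^ 2},
      ENNReal.ofReal ‖c k.1‖)
      ≤ ENNReal.ofReal (Real.sqrt 50 * Real.sqrt (Real.log ((N:ℝ)+3)) * Real.sqrt Y) := by
    refine lowCS.trans ?_
    rw [lowF2]
    have f1 : (∑' k : {k : ℤ × ℤ // k ≠ 0 ∧ latNormSq k ≤ (N : ℝ) ^ 2},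
        ENNReal.ofReal ((latNormSq k.1)⁻¹)) ^ ((1:ℝ)/2)
        ≤ (ENNReal.ofReal (50 * Real.log ((N:ℝ)+3))) ^ ((1:ℝ)/2) :=
      ENNReal.rpow_le_rpow (low_weight N hN) (by norm_num)
    refine le_trans (mul_le_mul' f1 le_rfl) ?_
    have hlognn : (0:ℝ) ≤ Real.log ((N:ℝ)+3) :=
      Real.log_nonneg (by linarith)
    have hLN : (0:ℝ) ≤ 50 * Real.log ((N:ℝ)+3) := by nlinarith
    rw [ENNReal.ofReal_rpow_of_nonneg hLN (by norm_num),
      ENNReal.ofReal_rpow_of_nonneg hYnn (by norm_num),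
      ← ENNReal.ofReal_mul (Real.rpow_nonneg hLN _)]
    apply ENNReal.ofReal_le_ofReal
    rw [← Real.sqrt_eq_rpow, ← Real.sqrt_eq_rpow, Real.sqrt_mul (by norm_num : (0:ℝ) ≤ 50)]
  refine le_trans (add_le_add highbound lowbound) ?_
  have hsq1 : 0 ≤ Real.sqrt C1 := Real.sqrt_nonneg _
  have hsq2 : 0 ≤ Real.sqrt 50 := Real.sqrt_nonneg _
  have hNs : 0 ≤ (N:ℝ)^(-(s-1)) := Real.rpow_nonneg hN0R.le _
  have ha : 0 ≤ (N:ℝ)^(-(s-1)) * Real.sqrt X := mul_nonneg hNs (Real.sqrt_nonneg _)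
  have hb : 0 ≤ Real.sqrt (Real.log ((N:ℝ)+3)) * Real.sqrt Y :=
    mul_nonneg (Real.sqrt_nonneg _) (Real.sqrt_nonneg _)
  rw [← ENNReal.ofReal_add (mul_nonneg (mul_nonneg hsq1 hNs) (Real.sqrt_nonneg _))
    (mul_nonneg (mul_nonneg hsq2 (Real.sqrt_nonneg _)) (Real.sqrt_nonneg _))]
  apply ENNReal.ofReal_le_ofReal
  nlinarith [ha, hb, hsq1, hsq2]
end

section
/- There exists a constant C > 0 such that for every smooth function f : ℝ² → ℝ that is 2π-periodic in each variable and has zero mean over Q = [0, 2π]², one has ( ∫_Q f⁴ dx )^{1/4} ≤ C · ( ∫_Q f² dx )^{1/4} · ( ∫_Q |∇f|² dx )^{1/4}. -/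
open MeasureTheory Real

/-- FTC-based oscillation bound on [0, 2π]. -/
lemma my_diff_le {g dg : ℝ → ℝ} (hg : ∀ t, HasDerivAt g (dg t) t) (hdg : Continuous dg)
    {s a : ℝ} (hs : s ∈ Set.Icc (0:ℝ) (2*π)) (ha : a ∈ Set.Icc (0:ℝ) (2*π)) :
    |g a - g s| ≤ ∫ t in Set.Icc (0:ℝ) (2*π), |dg t| := by
  have hint : IntegrableOn (fun t => |dg t|) (Set.Icc (0:ℝ) (2*π)) volume :=
    hdg.abs.integrableOn_Icc
  have hftc : g a - g s = ∫ t in s..a, dg t :=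
    (intervalIntegral.integral_eq_sub_of_hasDerivAt (fun t _ => hg t)
      (hdg.intervalIntegrable _ _)).symm
  rw [hftc]
  have h1 : |∫ t in s..a, dg t| ≤ abs (∫ t in s..a, abs (dg t)) := by
    simpa [Real.norm_eq_abs] using
      intervalIntegral.norm_integral_le_abs_integral_norm (a := s) (b := a) (f := dg) (μ := volume)
  refine h1.trans ?_
  rcases le_total s a with h | h
  · rw [intervalIntegral.integral_of_le h]
    rw [abs_of_nonneg (setIntegral_nonneg measurableSet_Ioc fun t _ => abs_nonneg _)]
    refine setIntegral_mono_set hint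
      (Filter.Eventually.of_forall fun t => abs_nonneg _) ?_
    exact ((Set.Ioc_subset_Icc_self).trans (Set.Icc_subset_Icc hs.1 ha.2)).eventuallyLE
  · rw [intervalIntegral.integral_of_ge h, abs_neg]
    rw [abs_of_nonneg (setIntegral_nonneg measurableSet_Ioc fun t _ => abs_nonneg _)]
    refine setIntegral_mono_set hint
      (Filter.Eventually.of_forall fun t => abs_nonneg _) ?_
    exact ((Set.Ioc_subset_Icc_self).trans (Set.Icc_subset_Icc ha.1 hs.2)).eventuallyLE

/-- Slice bound: g(a)² ≤ average of g² plus ∫ 2|g||g'|. -/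
lemma my_slice_sq {g dg : ℝ → ℝ} (hgc : Continuous g) (hdg : Continuous dg)
    (hg : ∀ t, HasDerivAt g (dg t) t) {a : ℝ} (ha : a ∈ Set.Icc (0:ℝ) (2*π)) :
    g a ^ 2 ≤ (1/(2*π)) * (∫ t in Set.Icc (0:ℝ) (2*π), g t ^ 2)
      + ∫ t in Set.Icc (0:ℝ) (2*π), 2 * |g t| * |dg t| := by
  set A := ∫ t in Set.Icc (0:ℝ) (2*π), 2 * |g t| * |dg t| with hA
  have hsq : ∀ t, HasDerivAt (fun u => g u ^ 2) (2 * g t * dg t) t := by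
    intro t
    have := (hg t).pow 2
    simpa [mul_comm, mul_assoc, mul_left_comm, Pi.pow_def] using this
  have hptwise : ∀ s ∈ Set.Icc (0:ℝ) (2*π), g a ^ 2 ≤ g s ^ 2 + A := by
    intro s hsmem
    have hd := my_diff_le hsq ((continuous_const.mul hgc).mul hdg) hsmem ha
    have heq : (∫ t in Set.Icc (0:ℝ) (2*π), |2 * g t * dg t|) = A := by
      rw [hA]
      refine setIntegral_congr_fun measurableSet_Icc fun t _ => ?_
      rw [abs_mul, abs_mul, abs_two]
    have h2 : g a ^ 2 - g s ^ 2 ≤ A := by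
      rw [← heq]; exact (le_abs_self _).trans hd
    linarith
  have hpos : (0:ℝ) < 2 * π := by positivity
  have hvol : volume (Set.Icc (0:ℝ) (2*π)) < ⊤ := by
    rw [Real.volume_Icc]; exact ENNReal.ofReal_lt_top
  have hμ : (volume (Set.Icc (0:ℝ) (2*π))).toReal = 2 * π := by
    rw [Real.volume_Icc, sub_zero, ENNReal.toReal_ofReal hpos.le]
  have hmono : ∫ (_ : ℝ) in Set.Icc (0:ℝ) (2*π), g a ^ 2
      ≤ ∫ s in Set.Icc (0:ℝ) (2*π), (g s ^ 2 + A) :=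
    setIntegral_mono_on ((integrableOn_const hvol.ne))
      (((hgc.pow 2).integrableOn_Icc).add ((integrableOn_const hvol.ne)))
      measurableSet_Icc hptwise
  rw [setIntegral_const, measureReal_def, hμ, smul_eq_mul,
    integral_add ((hgc.fun_pow 2).integrableOn_Icc) ((integrableOn_const (C := A) hvol.ne)),
    setIntegral_const, measureReal_def, hμ, smul_eq_mul] at hmono
  have h2 : g a ^ 2 ≤ ((∫ t in Set.Icc (0:ℝ) (2*π), g t ^ 2) + 2*π*A) / (2*π) := by
    rw [le_div_iff₀ hpos]; linarith
  refine h2.trans (le_of_eq ?_)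
  field_simp

lemma my_Qeq : Set.Icc ((0:ℝ), (0:ℝ)) (2*π, 2*π)
    = Set.Icc (0:ℝ) (2*π) ×ˢ Set.Icc (0:ℝ) (2*π) := Set.Icc_prod_eq _ _

lemma my_intQ {F : ℝ × ℝ → ℝ} (hF : Continuous F) :
    IntegrableOn F (Set.Icc ((0:ℝ), (0:ℝ)) (2*π, 2*π)) volume :=
  hF.continuousOn.integrableOn_compact isCompact_Icc

lemma my_intProd {F : ℝ × ℝ → ℝ} (hF : Continuous F) :
    Integrable F ((volume.restrict (Set.Icc (0:ℝ) (2*π))).prod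
      (volume.restrict (Set.Icc (0:ℝ) (2*π)))) := by
  rw [Measure.prod_restrict, ← Measure.volume_eq_prod]
  exact (my_intQ hF).mono_set (le_of_eq my_Qeq.symm)

lemma my_fub1 {F : ℝ × ℝ → ℝ} (hF : Continuous F) :
    ∫ p in Set.Icc ((0:ℝ), (0:ℝ)) (2*π, 2*π), F p
      = ∫ a in Set.Icc (0:ℝ) (2*π), ∫ b in Set.Icc (0:ℝ) (2*π), F (a, b) := by
  rw [my_Qeq, Measure.volume_eq_prod]
  refine setIntegral_prod F ?_
  rw [← Measure.volume_eq_prod, ← my_Qeq]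
  exact my_intQ hF

lemma my_fub2 {F : ℝ × ℝ → ℝ} (hF : Continuous F) :
    ∫ p in Set.Icc ((0:ℝ), (0:ℝ)) (2*π, 2*π), F p
      = ∫ b in Set.Icc (0:ℝ) (2*π), ∫ a in Set.Icc (0:ℝ) (2*π), F (a, b) := by
  rw [my_fub1 hF]
  exact integral_integral_swap (my_intProd hF)

lemma my_int_left {F : ℝ × ℝ → ℝ} (hF : Continuous F) :
    IntegrableOn (fun a => ∫ b in Set.Icc (0:ℝ) (2*π), F (a, b))
      (Set.Icc (0:ℝ) (2*π)) volume :=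
  (my_intProd hF).integral_prod_left

lemma my_int_right {F : ℝ × ℝ → ℝ} (hF : Continuous F) :
    IntegrableOn (fun b => ∫ a in Set.Icc (0:ℝ) (2*π), F (a, b))
      (Set.Icc (0:ℝ) (2*π)) volume :=
  (my_intProd hF).integral_prod_right

lemma my_vol2 : (volume (Set.Icc ((0:ℝ), (0:ℝ)) (2*π, 2*π))).toReal = (2*π) * (2*π) := by
  rw [my_Qeq, Measure.volume_eq_prod, Measure.prod_prod, Real.volume_Icc, sub_zero,
    ENNReal.toReal_mul, ENNReal.toReal_ofReal (by positivity : (0:ℝ) ≤ 2*π)]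

-- derivative of slices
lemma my_hasDeriv1 {f : ℝ × ℝ → ℝ} (hf : ContDiff ℝ (⊤ : ℕ∞) f) (b t : ℝ) :
    HasDerivAt (fun s => f (s, b)) (fderiv ℝ f (t, b) (1, 0)) t := by
  have h1 : HasDerivAt (fun s : ℝ => (s, b)) ((1:ℝ), (0:ℝ)) t :=
    (hasDerivAt_id t).prodMk (hasDerivAt_const t b)
  exact ((hf.differentiable (by simp) (t, b)).hasFDerivAt).comp_hasDerivAt t h1

lemma my_hasDeriv2 {f : ℝ × ℝ → ℝ} (hf : ContDiff ℝ (⊤ : ℕ∞) f) (a t : ℝ) :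
    HasDerivAt (fun s => f (a, s)) (fderiv ℝ f (a, t) (0, 1)) t := by
  have h1 : HasDerivAt (fun s : ℝ => (a, s)) ((0:ℝ), (1:ℝ)) t :=
    (hasDerivAt_const t a).prodMk (hasDerivAt_id t)
  exact ((hf.differentiable (by simp) (a, t)).hasFDerivAt).comp_hasDerivAt t h1

lemma my_cont_d {f : ℝ × ℝ → ℝ} (hf : ContDiff ℝ (⊤ : ℕ∞) f) (v : ℝ × ℝ) :
    Continuous (fun p => fderiv ℝ f p v) :=
  (ContinuousLinearMap.apply ℝ ℝ v).continuous.comp (hf.continuous_fderiv (by simp))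

lemma my_finI : IsFiniteMeasure (volume.restrict (Set.Icc (0:ℝ) (2*π))) :=
  ⟨by rw [Measure.restrict_apply_univ]; exact isCompact_Icc.measure_lt_top⟩

lemma my_finQ : IsFiniteMeasure (volume.restrict (Set.Icc ((0:ℝ),(0:ℝ)) (2*π, 2*π))) :=
  ⟨by rw [Measure.restrict_apply_univ]; exact isCompact_Icc.measure_lt_top⟩

lemma my_cauchy_schwarz {α : Type*} [MeasurableSpace α] {μ : Measure α} [IsFiniteMeasure μ]
    {g h : α → ℝ} (hg : AEStronglyMeasurable g μ) (hh : AEStronglyMeasurable h μ)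
    (Cg : ℝ) (bg : ∀ᵐ x ∂μ, ‖g x‖ ≤ Cg) (Ch : ℝ) (bh : ∀ᵐ x ∂μ, ‖h x‖ ≤ Ch) :
    ∫ x, |g x| * |h x| ∂μ ≤ Real.sqrt (∫ x, g x ^ 2 ∂μ) * Real.sqrt (∫ x, h x ^ 2 ∂μ) := by
  have hconj : (2 : ℝ).HolderConjugate 2 := Real.HolderConjugate.two_two
  have m1 : MemLp (fun x => |g x|) (ENNReal.ofReal 2) μ := by
    refine (memLp_top_of_bound hg.norm Cg ?_).mono_exponent le_top
    filter_upwards [bg] with x hx using by simpa using hx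
  have m2 : MemLp (fun x => |h x|) (ENNReal.ofReal 2) μ := by
    refine (memLp_top_of_bound hh.norm Ch ?_).mono_exponent le_top
    filter_upwards [bh] with x hx using by simpa using hx
  have key := integral_mul_le_Lp_mul_Lq_of_nonneg hconj
    (Filter.Eventually.of_forall fun x => abs_nonneg (g x))
    (Filter.Eventually.of_forall fun x => abs_nonneg (h x)) m1 m2
  calc ∫ x, |g x| * |h x| ∂μ
      ≤ (∫ x, |g x| ^ (2:ℝ) ∂μ) ^ (1/(2:ℝ)) * (∫ x, |h x| ^ (2:ℝ) ∂μ) ^ (1/(2:ℝ)) := key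
    _ = Real.sqrt (∫ x, g x ^ 2 ∂μ) * Real.sqrt (∫ x, h x ^ 2 ∂μ) := by
        have e1 : ∀ (u : ℝ), |u| ^ (2:ℝ) = u ^ 2 := fun u => by
          rw [show (2:ℝ) = ((2:ℕ):ℝ) by norm_num, Real.rpow_natCast, sq_abs]
        simp only [e1]
        rw [Real.sqrt_eq_rpow, Real.sqrt_eq_rpow]

lemma my_cs_Icc {g h : ℝ → ℝ} (hg : Continuous g) (hh : Continuous h) :
    ∫ t in Set.Icc (0:ℝ) (2*π), |g t| * |h t|
      ≤ Real.sqrt (∫ t in Set.Icc (0:ℝ) (2*π), g t ^ 2)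
        * Real.sqrt (∫ t in Set.Icc (0:ℝ) (2*π), h t ^ 2) := by
  haveI := my_finI
  obtain ⟨Cg, hCg⟩ := isCompact_Icc.exists_bound_of_continuousOn
    (hg.continuousOn : ContinuousOn g (Set.Icc (0:ℝ) (2*π)))
  obtain ⟨Ch, hCh⟩ := isCompact_Icc.exists_bound_of_continuousOn
    (hh.continuousOn : ContinuousOn h (Set.Icc (0:ℝ) (2*π)))
  refine my_cauchy_schwarz hg.aestronglyMeasurable hh.aestronglyMeasurable Cg ?_ Ch ?_
  · filter_upwards [ae_restrict_mem measurableSet_Icc] with x hx using hCg x hx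
  · filter_upwards [ae_restrict_mem measurableSet_Icc] with x hx using hCh x hx

lemma my_cs_Q {g h : ℝ × ℝ → ℝ} (hg : Continuous g) (hh : Continuous h) :
    ∫ p in Set.Icc ((0:ℝ),(0:ℝ)) (2*π, 2*π), |g p| * |h p|
      ≤ Real.sqrt (∫ p in Set.Icc ((0:ℝ),(0:ℝ)) (2*π, 2*π), g p ^ 2)
        * Real.sqrt (∫ p in Set.Icc ((0:ℝ),(0:ℝ)) (2*π, 2*π), h p ^ 2) := by
  haveI := my_finQ
  obtain ⟨Cg, hCg⟩ := isCompact_Icc.exists_bound_of_continuousOn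
    (hg.continuousOn : ContinuousOn g (Set.Icc ((0:ℝ),(0:ℝ)) (2*π, 2*π)))
  obtain ⟨Ch, hCh⟩ := isCompact_Icc.exists_bound_of_continuousOn
    (hh.continuousOn : ContinuousOn h (Set.Icc ((0:ℝ),(0:ℝ)) (2*π, 2*π)))
  refine my_cauchy_schwarz hg.aestronglyMeasurable hh.aestronglyMeasurable Cg ?_ Ch ?_
  · filter_upwards [ae_restrict_mem measurableSet_Icc] with x hx using hCg x hx
  · filter_upwards [ae_restrict_mem measurableSet_Icc] with x hx using hCh x hx

lemma my_cs_Icc' {g : ℝ → ℝ} (hg : Continuous g) :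
    (∫ t in Set.Icc (0:ℝ) (2*π), |g t|) ^ 2 ≤ (2*π) * ∫ t in Set.Icc (0:ℝ) (2*π), g t ^ 2 := by
  have h1 : ∫ t in Set.Icc (0:ℝ) (2*π), |g t| = ∫ t in Set.Icc (0:ℝ) (2*π), |g t| * |(1:ℝ)| := by
    simp
  have h2 := my_cs_Icc hg continuous_const (h := fun _ => (1:ℝ))
  rw [← h1] at h2
  have h3 : (∫ t in Set.Icc (0:ℝ) (2*π), (1:ℝ) ^ 2) = 2*π := by
    simp [Real.volume_Icc, ENNReal.toReal_ofReal (by positivity : (0:ℝ) ≤ 2*π), Real.pi_nonneg]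
  rw [h3] at h2
  have hnn : (0:ℝ) ≤ ∫ t in Set.Icc (0:ℝ) (2*π), |g t| :=
    setIntegral_nonneg measurableSet_Icc fun t _ => abs_nonneg _
  have hgnn : (0:ℝ) ≤ ∫ t in Set.Icc (0:ℝ) (2*π), g t ^ 2 :=
    setIntegral_nonneg measurableSet_Icc fun t _ => sq_nonneg _
  calc (∫ t in Set.Icc (0:ℝ) (2*π), |g t|) ^ 2
      ≤ (Real.sqrt (∫ t in Set.Icc (0:ℝ) (2*π), g t ^ 2) * Real.sqrt (2*π)) ^ 2 :=
        pow_le_pow_left₀ hnn h2 2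
    _ = (2*π) * ∫ t in Set.Icc (0:ℝ) (2*π), g t ^ 2 := by
        rw [mul_pow, sq_sqrt hgnn, sq_sqrt (by positivity : (0:ℝ) ≤ 2*π)]; ring

lemma my_cs_Q' {g : ℝ × ℝ → ℝ} (hg : Continuous g) :
    (∫ p in Set.Icc ((0:ℝ),(0:ℝ)) (2*π, 2*π), |g p|) ^ 2
      ≤ ((2*π) * (2*π)) * ∫ p in Set.Icc ((0:ℝ),(0:ℝ)) (2*π, 2*π), g p ^ 2 := by
  have h1 : ∫ p in Set.Icc ((0:ℝ),(0:ℝ)) (2*π, 2*π), |g p|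
      = ∫ p in Set.Icc ((0:ℝ),(0:ℝ)) (2*π, 2*π), |g p| * |(1:ℝ)| := by simp
  have h2 := my_cs_Q hg continuous_const (h := fun _ => (1:ℝ))
  rw [← h1] at h2
  have h3 : (∫ _ in Set.Icc ((0:ℝ),(0:ℝ)) (2*π, 2*π), (1:ℝ) ^ 2) = (2*π) * (2*π) := by
    rw [one_pow]
    rw [setIntegral_const, smul_eq_mul, mul_one]
    rw [Set.Icc_prod_eq, Measure.volume_eq_prod, measureReal_def, Measure.prod_prod, Real.volume_Icc, sub_zero,
      ENNReal.toReal_mul, ENNReal.toReal_ofReal (by positivity : (0:ℝ) ≤ 2*π)]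
  rw [h3] at h2
  have hnn : (0:ℝ) ≤ ∫ p in Set.Icc ((0:ℝ),(0:ℝ)) (2*π, 2*π), |g p| :=
    setIntegral_nonneg measurableSet_Icc fun t _ => abs_nonneg _
  have hgnn : (0:ℝ) ≤ ∫ p in Set.Icc ((0:ℝ),(0:ℝ)) (2*π, 2*π), g p ^ 2 :=
    setIntegral_nonneg measurableSet_Icc fun t _ => sq_nonneg _
  calc (∫ p in Set.Icc ((0:ℝ),(0:ℝ)) (2*π, 2*π), |g p|) ^ 2
      ≤ (Real.sqrt (∫ p in Set.Icc ((0:ℝ),(0:ℝ)) (2*π, 2*π), g p ^ 2)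
          * Real.sqrt ((2*π) * (2*π))) ^ 2 := pow_le_pow_left₀ hnn h2 2
    _ = ((2*π) * (2*π)) * ∫ p in Set.Icc ((0:ℝ),(0:ℝ)) (2*π, 2*π), g p ^ 2 := by
        rw [mul_pow, sq_sqrt hgnn, sq_sqrt (by positivity : (0:ℝ) ≤ (2*π)*(2*π))]; ring

-- pointwise Poincaré-type bound
lemma my_pt_bound {f : ℝ × ℝ → ℝ} (hf : ContDiff ℝ (⊤ : ℕ∞) f)
    (hmean : (∫ p in Set.Icc ((0:ℝ),(0:ℝ)) (2*π, 2*π), f p) = 0)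
    {a b : ℝ} (ha : a ∈ Set.Icc (0:ℝ) (2*π)) (hb : b ∈ Set.Icc (0:ℝ) (2*π)) :
    (2*π) * |f (a,b)| ≤ (2*π) * (∫ u in Set.Icc (0:ℝ) (2*π), |fderiv ℝ f (u, b) (1,0)|)
      + ∫ p in Set.Icc ((0:ℝ),(0:ℝ)) (2*π, 2*π), |fderiv ℝ f p (0,1)| := by
  have hπ : (0:ℝ) < 2*π := by positivity
  have hfc : Continuous f := hf.continuous
  have hd1c : Continuous (fun p : ℝ×ℝ => fderiv ℝ f p (1,0)) := my_cont_d hf _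
  have hd2c : Continuous (fun p : ℝ×ℝ => fderiv ℝ f p (0,1)) := my_cont_d hf _
  set J1 : ℝ := ∫ u in Set.Icc (0:ℝ) (2*π), |fderiv ℝ f (u, b) (1,0)| with hJ1def
  set K : ℝ := ∫ p in Set.Icc ((0:ℝ),(0:ℝ)) (2*π, 2*π), |fderiv ℝ f p (0,1)| with hKdef
  set J2 : ℝ → ℝ := fun s => ∫ u in Set.Icc (0:ℝ) (2*π), |fderiv ℝ f (s, u) (0,1)| with hJ2def
  have hvolQ : volume (Set.Icc ((0:ℝ),(0:ℝ)) (2*π, 2*π)) < ⊤ := isCompact_Icc.measure_lt_top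
  have hμI : (volume (Set.Icc (0:ℝ) (2*π))).toReal = 2*π := by
    rw [Real.volume_Icc, sub_zero, ENNReal.toReal_ofReal hπ.le]
  -- the representation
  have hrep : (2*π) * ((2*π) * f (a,b))
      = ∫ p in Set.Icc ((0:ℝ),(0:ℝ)) (2*π, 2*π), (f (a,b) - f p) := by
    rw [integral_sub ((integrableOn_const (C := f (a,b)) hvolQ.ne)) (my_intQ hfc), hmean, sub_zero,
      setIntegral_const, measureReal_def, my_vol2, smul_eq_mul]
    ring
  -- pointwise oscillation bound
  have hosc : ∀ s ∈ Set.Icc (0:ℝ) (2*π), ∀ t ∈ Set.Icc (0:ℝ) (2*π),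
      |f (a,b) - f (s,t)| ≤ J1 + J2 s := by
    intro s hs t ht
    have h1 : |f (a,b) - f (s,b)| ≤ J1 := by
      refine my_diff_le (g := fun u => f (u, b)) (dg := fun u => fderiv ℝ f (u, b) (1,0))
        (fun u => my_hasDeriv1 hf b u) (hd1c.comp (continuous_id.prodMk continuous_const))
        hs ha
    have h2 : |f (s,b) - f (s,t)| ≤ J2 s := by
      refine my_diff_le (g := fun u => f (s, u)) (dg := fun u => fderiv ℝ f (s, u) (0,1))
        (fun u => my_hasDeriv2 hf s u) (hd2c.comp (continuous_const.prodMk continuous_id))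
        ht hb
    calc |f (a,b) - f (s,t)| = |(f (a,b) - f (s,b)) + (f (s,b) - f (s,t))| := by ring_nf
      _ ≤ |f (a,b) - f (s,b)| + |f (s,b) - f (s,t)| := abs_add_le _ _
      _ ≤ J1 + J2 s := add_le_add h1 h2
  -- integrability of J2
  have hJ2int : IntegrableOn J2 (Set.Icc (0:ℝ) (2*π)) volume :=
    my_int_left (F := fun p => |fderiv ℝ f p (0,1)|) hd2c.abs
  have hvolI : volume (Set.Icc (0:ℝ) (2*π)) < ⊤ := isCompact_Icc.measure_lt_top
  -- bound the Q-integral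
  have habs : |(2*π) * ((2*π) * f (a,b))|
      ≤ ∫ p in Set.Icc ((0:ℝ),(0:ℝ)) (2*π, 2*π), |f (a,b) - f p| := by
    rw [hrep]
    simpa [Real.norm_eq_abs] using
      norm_integral_le_integral_norm (μ := volume.restrict (Set.Icc ((0:ℝ),(0:ℝ)) (2*π, 2*π)))
        (f := fun p => f (a,b) - f p)
  have hiter : ∫ p in Set.Icc ((0:ℝ),(0:ℝ)) (2*π, 2*π), |f (a,b) - f p|
      = ∫ s in Set.Icc (0:ℝ) (2*π), ∫ t in Set.Icc (0:ℝ) (2*π), |f (a,b) - f (s,t)| :=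
    my_fub1 ((continuous_const.sub hfc).abs)
  have hinner : ∀ s ∈ Set.Icc (0:ℝ) (2*π),
      (∫ t in Set.Icc (0:ℝ) (2*π), |f (a,b) - f (s,t)|) ≤ (2*π) * (J1 + J2 s) := by
    intro s hs
    have hle : (∫ t in Set.Icc (0:ℝ) (2*π), |f (a,b) - f (s,t)|)
        ≤ ∫ _ in Set.Icc (0:ℝ) (2*π), (J1 + J2 s) := by
      refine setIntegral_mono_on ?_ ((integrableOn_const hvolI.ne))
        measurableSet_Icc (fun t ht => hosc s hs t ht)
      exact (((continuous_const.sub hfc).abs).comp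
        (continuous_const.prodMk continuous_id)).integrableOn_Icc
    rw [setIntegral_const, measureReal_def, hμI, smul_eq_mul] at hle
    exact hle
  have houter : (∫ s in Set.Icc (0:ℝ) (2*π), ∫ t in Set.Icc (0:ℝ) (2*π), |f (a,b) - f (s,t)|)
      ≤ ∫ s in Set.Icc (0:ℝ) (2*π), (2*π) * (J1 + J2 s) := by
    refine setIntegral_mono_on ?_ ?_ measurableSet_Icc hinner
    · exact my_int_left (F := fun p => |f (a,b) - f p|) ((continuous_const.sub hfc).abs)
    · exact ((((integrableOn_const hvolI.ne)).add hJ2int).const_mul (2*π))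
  have hcomp : (∫ s in Set.Icc (0:ℝ) (2*π), (2*π) * (J1 + J2 s))
      = (2*π) * ((2*π) * J1 + K) := by
    rw [integral_const_mul, integral_add ((integrableOn_const (C := J1) hvolI.ne)) hJ2int,
      setIntegral_const, measureReal_def, hμI, smul_eq_mul]
    have : (∫ s in Set.Icc (0:ℝ) (2*π), J2 s) = K := by
      rw [hKdef, my_fub1 hd2c.abs]
    rw [this]
  have hfin : (2*π) * ((2*π) * |f (a,b)|) ≤ (2*π) * ((2*π) * J1 + K) := by
    have : |(2*π) * ((2*π) * f (a,b))| = (2*π) * ((2*π) * |f (a,b)|) := by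
      simp [abs_mul, abs_of_pos Real.pi_pos]
    rw [← this]
    exact habs.trans (le_of_eq hiter |>.trans (houter.trans (le_of_eq hcomp)))
  have := (mul_le_mul_iff_right₀ hπ).mp hfin
  linarith

lemma my_poincare {f : ℝ × ℝ → ℝ} (hf : ContDiff ℝ (⊤ : ℕ∞) f)
    (hmean : (∫ p in Set.Icc ((0:ℝ),(0:ℝ)) (2*π, 2*π), f p) = 0) :
    (∫ p in Set.Icc ((0:ℝ),(0:ℝ)) (2*π, 2*π), f p ^ 2)
      ≤ 8*π^2 * ∫ p in Set.Icc ((0:ℝ),(0:ℝ)) (2*π, 2*π),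
          ((fderiv ℝ f p (1,0))^2 + (fderiv ℝ f p (0,1))^2) := by
  have hπ : (0:ℝ) < 2*π := by positivity
  have hfc : Continuous f := hf.continuous
  have hd1c : Continuous (fun p : ℝ×ℝ => fderiv ℝ f p (1,0)) := my_cont_d hf _
  have hd2c : Continuous (fun p : ℝ×ℝ => fderiv ℝ f p (0,1)) := my_cont_d hf _
  have hvolI : volume (Set.Icc (0:ℝ) (2*π)) < ⊤ := isCompact_Icc.measure_lt_top
  have hμI : (volume (Set.Icc (0:ℝ) (2*π))).toReal = 2*π := by
    rw [Real.volume_Icc, sub_zero, ENNReal.toReal_ofReal hπ.le]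
  set D1 : ℝ := ∫ p in Set.Icc ((0:ℝ),(0:ℝ)) (2*π, 2*π), (fderiv ℝ f p (1,0))^2 with hD1
  set D2 : ℝ := ∫ p in Set.Icc ((0:ℝ),(0:ℝ)) (2*π, 2*π), (fderiv ℝ f p (0,1))^2 with hD2
  set P : ℝ → ℝ := fun b => ∫ a in Set.Icc (0:ℝ) (2*π), (fderiv ℝ f (a,b) (1,0))^2 with hP
  have hD2nn : 0 ≤ D2 := setIntegral_nonneg measurableSet_Icc fun p _ => sq_nonneg _
  -- pointwise bound
  have hpt : ∀ b ∈ Set.Icc (0:ℝ) (2*π), ∀ a ∈ Set.Icc (0:ℝ) (2*π),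
      f (a,b) ^ 2 ≤ 4*π*P b + 2*D2 := by
    intro b hb a ha
    set J1 : ℝ := ∫ u in Set.Icc (0:ℝ) (2*π), |fderiv ℝ f (u, b) (1,0)| with hJ1
    set K : ℝ := ∫ p in Set.Icc ((0:ℝ),(0:ℝ)) (2*π, 2*π), |fderiv ℝ f p (0,1)| with hK
    have hbd := my_pt_bound hf hmean ha hb
    have hsq : ((2*π) * |f (a,b)|)^2 ≤ ((2*π) * J1 + K)^2 :=
      pow_le_pow_left₀ (by positivity) hbd 2
    have hJ1sq : J1^2 ≤ (2*π) * P b := by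
      simpa using my_cs_Icc' (g := fun u => fderiv ℝ f (u,b) (1,0))
        (hd1c.comp (continuous_id.prodMk continuous_const))
    have hKsq : K^2 ≤ ((2*π)*(2*π)) * D2 := by
      simpa using my_cs_Q' (g := fun p => fderiv ℝ f p (0,1)) hd2c
    have hexp : ((2*π) * |f (a,b)|)^2 = (2*π)^2 * f (a,b)^2 := by
      rw [mul_pow, sq_abs]
    rw [hexp] at hsq
    have hmain : (2*π)^2 * f (a,b)^2 ≤ (2*π)^2 * (4*π*P b + 2*D2) := by
      nlinarith [sq_nonneg ((2*π)*J1 - K), hJ1sq, hKsq, hsq, Real.pi_pos,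
        mul_le_mul_of_nonneg_left hJ1sq (by positivity : (0:ℝ) ≤ 2*(2*π)^2)]
    exact (mul_le_mul_iff_right₀ (by positivity)).mp hmain
  -- integrate
  have hinner : ∀ b ∈ Set.Icc (0:ℝ) (2*π),
      (∫ a in Set.Icc (0:ℝ) (2*π), f (a,b)^2) ≤ (2*π) * (4*π*P b + 2*D2) := by
    intro b hb
    have hle : (∫ a in Set.Icc (0:ℝ) (2*π), f (a,b)^2)
        ≤ ∫ _ in Set.Icc (0:ℝ) (2*π), (4*π*P b + 2*D2) := by
      refine setIntegral_mono_on ?_ ((integrableOn_const hvolI.ne))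
        measurableSet_Icc (fun a ha => hpt b hb a ha)
      exact (((hfc.comp (continuous_id.prodMk continuous_const)).pow 2)).integrableOn_Icc
    rw [setIntegral_const, measureReal_def, hμI, smul_eq_mul] at hle
    exact hle
  have hPint : IntegrableOn P (Set.Icc (0:ℝ) (2*π)) volume :=
    my_int_right (F := fun p => (fderiv ℝ f p (1,0))^2) (hd1c.pow 2)
  have houter : (∫ b in Set.Icc (0:ℝ) (2*π), ∫ a in Set.Icc (0:ℝ) (2*π), f (a,b)^2)
      ≤ ∫ b in Set.Icc (0:ℝ) (2*π), (2*π) * (4*π*P b + 2*D2) := by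
    refine setIntegral_mono_on ?_ ?_ measurableSet_Icc hinner
    · exact my_int_right (F := fun p => f p ^ 2) (hfc.pow 2)
    · exact ((hPint.const_mul (4*π)).add ((integrableOn_const hvolI.ne))).const_mul (2*π)
  have hfub : (∫ p in Set.Icc ((0:ℝ),(0:ℝ)) (2*π, 2*π), f p ^ 2)
      = ∫ b in Set.Icc (0:ℝ) (2*π), ∫ a in Set.Icc (0:ℝ) (2*π), f (a,b)^2 :=
    my_fub2 (hfc.pow 2)
  have hPfub : (∫ b in Set.Icc (0:ℝ) (2*π), P b) = D1 := (my_fub2 (hd1c.pow 2)).symm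
  have hcomp : (∫ b in Set.Icc (0:ℝ) (2*π), (2*π) * (4*π*P b + 2*D2))
      = (2*π) * (4*π*D1 + (2*π) * (2*D2)) := by
    rw [integral_const_mul, integral_add (hPint.const_mul (4*π))
      ((integrableOn_const hvolI.ne)), integral_const_mul, hPfub,
      setIntegral_const, measureReal_def, hμI, smul_eq_mul]
  have hDsplit : (∫ p in Set.Icc ((0:ℝ),(0:ℝ)) (2*π, 2*π),
      ((fderiv ℝ f p (1,0))^2 + (fderiv ℝ f p (0,1))^2)) = D1 + D2 :=
    integral_add (my_intQ (hd1c.pow 2)) (my_intQ (hd2c.pow 2))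
  rw [hfub, hDsplit]
  refine houter.trans ?_
  rw [hcomp]
  nlinarith [Real.pi_pos, hD2nn, setIntegral_nonneg (μ := volume) measurableSet_Icc
    (fun p (_ : p ∈ Set.Icc ((0:ℝ),(0:ℝ)) (2*π, 2*π)) => sq_nonneg (fderiv ℝ f p (1,0)))]

set_option maxHeartbeats 1000000 in
lemma my_core {f : ℝ × ℝ → ℝ} (hf : ContDiff ℝ (⊤ : ℕ∞) f)
    (hmean : (∫ p in Set.Icc ((0:ℝ),(0:ℝ)) (2*π, 2*π), f p) = 0) :
    (∫ p in Set.Icc ((0:ℝ),(0:ℝ)) (2*π, 2*π), f p ^ 4)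
      ≤ 16 * (∫ p in Set.Icc ((0:ℝ),(0:ℝ)) (2*π, 2*π), f p ^ 2)
        * (∫ p in Set.Icc ((0:ℝ),(0:ℝ)) (2*π, 2*π),
            ((fderiv ℝ f p (1,0))^2 + (fderiv ℝ f p (0,1))^2)) := by
  have hπ : (0:ℝ) < 2*π := by positivity
  have hfc : Continuous f := hf.continuous
  have hd1c : Continuous (fun p : ℝ×ℝ => fderiv ℝ f p (1,0)) := my_cont_d hf _
  have hd2c : Continuous (fun p : ℝ×ℝ => fderiv ℝ f p (0,1)) := my_cont_d hf _
  have hvolI : volume (Set.Icc (0:ℝ) (2*π)) < ⊤ := isCompact_Icc.measure_lt_top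
  set X : ℝ := ∫ p in Set.Icc ((0:ℝ),(0:ℝ)) (2*π, 2*π), f p ^ 2 with hX
  set Y : ℝ := ∫ p in Set.Icc ((0:ℝ),(0:ℝ)) (2*π, 2*π),
      ((fderiv ℝ f p (1,0))^2 + (fderiv ℝ f p (0,1))^2) with hY
  set Y1 : ℝ := ∫ p in Set.Icc ((0:ℝ),(0:ℝ)) (2*π, 2*π), (fderiv ℝ f p (1,0))^2 with hY1
  set Y2 : ℝ := ∫ p in Set.Icc ((0:ℝ),(0:ℝ)) (2*π, 2*π), (fderiv ℝ f p (0,1))^2 with hY2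
  have hXnn : 0 ≤ X := setIntegral_nonneg measurableSet_Icc fun p _ => sq_nonneg _
  have hY1nn : 0 ≤ Y1 := setIntegral_nonneg measurableSet_Icc fun p _ => sq_nonneg _
  have hY2nn : 0 ≤ Y2 := setIntegral_nonneg measurableSet_Icc fun p _ => sq_nonneg _
  have hYsplit : Y = Y1 + Y2 := integral_add (my_intQ (hd1c.pow 2)) (my_intQ (hd2c.pow 2))
  have hYnn : 0 ≤ Y := hYsplit ▸ add_nonneg hY1nn hY2nn
  set F : ℝ → ℝ := fun b => (1/(2*π)) * (∫ t in Set.Icc (0:ℝ) (2*π), f (t,b) ^ 2)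
      + ∫ t in Set.Icc (0:ℝ) (2*π), 2 * |f (t,b)| * |fderiv ℝ f (t,b) (1,0)| with hF
  set G : ℝ → ℝ := fun a => (1/(2*π)) * (∫ t in Set.Icc (0:ℝ) (2*π), f (a,t) ^ 2)
      + ∫ t in Set.Icc (0:ℝ) (2*π), 2 * |f (a,t)| * |fderiv ℝ f (a,t) (0,1)| with hG
  -- slice bounds
  have hFb : ∀ b ∈ Set.Icc (0:ℝ) (2*π), ∀ a ∈ Set.Icc (0:ℝ) (2*π), f (a,b)^2 ≤ F b := by
    intro b _ a ha
    exact my_slice_sq (hfc.comp (continuous_id.prodMk continuous_const))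
      (hd1c.comp (continuous_id.prodMk continuous_const))
      (fun t => my_hasDeriv1 hf b t) ha
  have hGa : ∀ a ∈ Set.Icc (0:ℝ) (2*π), ∀ b ∈ Set.Icc (0:ℝ) (2*π), f (a,b)^2 ≤ G a := by
    intro a _ b hb
    exact my_slice_sq (hfc.comp (continuous_const.prodMk continuous_id))
      (hd2c.comp (continuous_const.prodMk continuous_id))
      (fun t => my_hasDeriv2 hf a t) hb
  have hFnn : ∀ b, 0 ≤ F b := by
    intro b
    refine add_nonneg (mul_nonneg (by positivity)
      (setIntegral_nonneg measurableSet_Icc fun t _ => sq_nonneg _))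
      (setIntegral_nonneg measurableSet_Icc fun t _ => by positivity)
  have hGnn : ∀ a, 0 ≤ G a := by
    intro a
    refine add_nonneg (mul_nonneg (by positivity)
      (setIntegral_nonneg measurableSet_Icc fun t _ => sq_nonneg _))
      (setIntegral_nonneg measurableSet_Icc fun t _ => by positivity)
  -- integrability of F and G
  have hFint : IntegrableOn F (Set.Icc (0:ℝ) (2*π)) volume := by
    refine (((my_int_right (F := fun p => f p ^ 2) (hfc.pow 2)).const_mul _).add ?_)
    exact my_int_right (F := fun p => 2 * |f p| * |fderiv ℝ f p (1,0)|)
      ((continuous_const.mul hfc.abs).mul hd1c.abs)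
  have hGint : IntegrableOn G (Set.Icc (0:ℝ) (2*π)) volume := by
    refine (((my_int_left (F := fun p => f p ^ 2) (hfc.pow 2)).const_mul _).add ?_)
    exact my_int_left (F := fun p => 2 * |f p| * |fderiv ℝ f p (0,1)|)
      ((continuous_const.mul hfc.abs).mul hd2c.abs)
  set CF : ℝ := ∫ b in Set.Icc (0:ℝ) (2*π), F b with hCF
  -- step C : ∫ f⁴ ≤ (∫ G) * (∫ F)
  have hstepC : (∫ p in Set.Icc ((0:ℝ),(0:ℝ)) (2*π, 2*π), f p ^ 4)
      ≤ (∫ a in Set.Icc (0:ℝ) (2*π), G a) * CF := by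
    rw [my_fub1 (hfc.fun_pow 4)]
    have hinner : ∀ a ∈ Set.Icc (0:ℝ) (2*π),
        (∫ b in Set.Icc (0:ℝ) (2*π), f (a,b) ^ 4) ≤ G a * CF := by
      intro a ha
      have h1 : (∫ b in Set.Icc (0:ℝ) (2*π), f (a,b) ^ 4)
          ≤ ∫ b in Set.Icc (0:ℝ) (2*π), G a * F b := by
        refine setIntegral_mono_on
          ((hfc.comp (continuous_const.prodMk continuous_id)).pow 4).integrableOn_Icc
          (hFint.const_mul _) measurableSet_Icc ?_
        intro b hb
        have e : f (a,b)^4 = f (a,b)^2 * f (a,b)^2 := by ring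
        rw [e]
        exact mul_le_mul (hGa a ha b hb) (hFb b hb a ha) (sq_nonneg _) (hGnn a)
      rw [integral_const_mul] at h1
      exact h1
    have h2 : (∫ a in Set.Icc (0:ℝ) (2*π), ∫ b in Set.Icc (0:ℝ) (2*π), f (a,b) ^ 4)
        ≤ ∫ a in Set.Icc (0:ℝ) (2*π), G a * CF := by
      refine setIntegral_mono_on (my_int_left (F := fun p => f p ^ 4) (hfc.pow 4))
        (hGint.mul_const _) measurableSet_Icc hinner
    rw [integral_mul_const] at h2
    exact h2
  -- step D : ∫ F ≤ 4 √X √Y  and ∫ G ≤ 4 √X √Y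
  have hXY : X ≤ 8*π^2 * Y := my_poincare hf hmean
  have hsqX : Real.sqrt X ≤ Real.sqrt (8*π^2) * Real.sqrt Y := by
    rw [← Real.sqrt_mul (by positivity)]
    exact Real.sqrt_le_sqrt hXY
  have haux : (1/(2*π)) * X ≤ 2 * (Real.sqrt X * Real.sqrt Y) := by
    have e : X = Real.sqrt X * Real.sqrt X := (Real.mul_self_sqrt hXnn).symm
    calc (1/(2*π)) * X = (1/(2*π)) * (Real.sqrt X * Real.sqrt X) := by rw [← e]
      _ ≤ (1/(2*π)) * (Real.sqrt X * (Real.sqrt (8*π^2) * Real.sqrt Y)) := by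
          refine mul_le_mul_of_nonneg_left ?_ (by positivity)
          exact mul_le_mul_of_nonneg_left hsqX (Real.sqrt_nonneg _)
      _ ≤ (1/(2*π)) * ((4*π) * (Real.sqrt X * Real.sqrt Y)) := by
          have h8 : Real.sqrt (8*π^2) ≤ 4*π := by
            rw [show (8:ℝ)*π^2 = (4*π)^2/2 by ring]
            refine (Real.sqrt_le_sqrt (by nlinarith [Real.pi_pos] :
              (4*π)^2/2 ≤ (4*π)^2)).trans ?_
            rw [Real.sqrt_sq (by positivity)]
          have hsx := Real.sqrt_nonneg X
          have hsy := Real.sqrt_nonneg Y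
          refine mul_le_mul_of_nonneg_left ?_ (by positivity)
          nlinarith [mul_le_mul_of_nonneg_right h8 (mul_nonneg hsx hsy)]
      _ = 2 * (Real.sqrt X * Real.sqrt Y) := by
          have hπ0 : π ≠ 0 := Real.pi_ne_zero
          field_simp
          ring
  have hcsF : (∫ p in Set.Icc ((0:ℝ),(0:ℝ)) (2*π, 2*π), 2 * |f p| * |fderiv ℝ f p (1,0)|)
      ≤ 2 * (Real.sqrt X * Real.sqrt Y1) := by
    have e : ∀ p : ℝ×ℝ, 2 * |f p| * |fderiv ℝ f p (1,0)|
        = 2 * (|f p| * |fderiv ℝ f p (1,0)|) := fun p => by ring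
    simp only [e]
    rw [integral_const_mul]
    exact mul_le_mul_of_nonneg_left (my_cs_Q hfc hd1c) (by norm_num)
  have hcsG : (∫ p in Set.Icc ((0:ℝ),(0:ℝ)) (2*π, 2*π), 2 * |f p| * |fderiv ℝ f p (0,1)|)
      ≤ 2 * (Real.sqrt X * Real.sqrt Y2) := by
    have e : ∀ p : ℝ×ℝ, 2 * |f p| * |fderiv ℝ f p (0,1)|
        = 2 * (|f p| * |fderiv ℝ f p (0,1)|) := fun p => by ring
    simp only [e]
    rw [integral_const_mul]
    exact mul_le_mul_of_nonneg_left (my_cs_Q hfc hd2c) (by norm_num)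
  have hsqY1 : Real.sqrt Y1 ≤ Real.sqrt Y := Real.sqrt_le_sqrt (by rw [hYsplit]; linarith)
  have hsqY2 : Real.sqrt Y2 ≤ Real.sqrt Y := Real.sqrt_le_sqrt (by rw [hYsplit]; linarith)
  have hFsum : CF = (1/(2*π)) * X
      + ∫ p in Set.Icc ((0:ℝ),(0:ℝ)) (2*π, 2*π), 2 * |f p| * |fderiv ℝ f p (1,0)| := by
    rw [hCF]
    rw [integral_add ((my_int_right (F := fun p => f p ^ 2) (hfc.pow 2)).const_mul _)
      (my_int_right (F := fun p => 2 * |f p| * |fderiv ℝ f p (1,0)|)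
        ((continuous_const.mul hfc.abs).mul hd1c.abs)), integral_const_mul]
    rw [hX, my_fub2 (hfc.fun_pow 2), my_fub2 (F := fun p => 2 * |f p| * |fderiv ℝ f p (1,0)|)
      ((continuous_const.mul hfc.abs).mul hd1c.abs)]
  have hGsum : (∫ a in Set.Icc (0:ℝ) (2*π), G a) = (1/(2*π)) * X
      + ∫ p in Set.Icc ((0:ℝ),(0:ℝ)) (2*π, 2*π), 2 * |f p| * |fderiv ℝ f p (0,1)| := by
    rw [hG]
    rw [integral_add ((my_int_left (F := fun p => f p ^ 2) (hfc.pow 2)).const_mul _)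
      (my_int_left (F := fun p => 2 * |f p| * |fderiv ℝ f p (0,1)|)
        ((continuous_const.mul hfc.abs).mul hd2c.abs)), integral_const_mul]
    rw [hX, my_fub1 (hfc.fun_pow 2), my_fub1 (F := fun p => 2 * |f p| * |fderiv ℝ f p (0,1)|)
      ((continuous_const.mul hfc.abs).mul hd2c.abs)]
  have hCFnn : 0 ≤ CF := setIntegral_nonneg measurableSet_Icc fun b _ => hFnn b
  have hGnn' : 0 ≤ ∫ a in Set.Icc (0:ℝ) (2*π), G a :=
    setIntegral_nonneg measurableSet_Icc fun a _ => hGnn a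
  clear_value X Y Y1 Y2 F G CF
  have hsxnn := Real.sqrt_nonneg X
  have hsynn := Real.sqrt_nonneg Y
  have hFle : CF ≤ 4 * (Real.sqrt X * Real.sqrt Y) := by
    rw [hFsum]
    have := mul_le_mul_of_nonneg_left hsqY1 (mul_nonneg (by norm_num : (0:ℝ) ≤ 2) hsxnn)
    nlinarith [hcsF, haux]
  have hGle : (∫ a in Set.Icc (0:ℝ) (2*π), G a) ≤ 4 * (Real.sqrt X * Real.sqrt Y) := by
    rw [hGsum]
    nlinarith [hcsG, haux, mul_le_mul_of_nonneg_left hsqY2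
      (mul_nonneg (by norm_num : (0:ℝ) ≤ 2) hsxnn)]
  calc (∫ p in Set.Icc ((0:ℝ),(0:ℝ)) (2*π, 2*π), f p ^ 4)
      ≤ (∫ a in Set.Icc (0:ℝ) (2*π), G a) * CF := hstepC
    _ ≤ (4 * (Real.sqrt X * Real.sqrt Y)) * (4 * (Real.sqrt X * Real.sqrt Y)) := by
        exact mul_le_mul hGle hFle hCFnn
          (mul_nonneg (by norm_num) (mul_nonneg hsxnn hsynn))
    _ = 16 * (Real.sqrt X * Real.sqrt X) * (Real.sqrt Y * Real.sqrt Y) := by ring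
    _ = 16 * X * Y := by rw [Real.mul_self_sqrt hXnn, Real.mul_self_sqrt hYnn]

/-- Ladyzhenskaya inequality ‖f‖₄ ≤ C ‖f‖₂^{1/2} ‖∇f‖₂^{1/2} for smooth
2π-periodic mean-zero functions on the 2D torus. -/
theorem ladyzhenskaya_L4 :
    ∃ C : ℝ, 0 < C ∧
      ∀ f : ℝ × ℝ → ℝ, ContDiff ℝ (⊤ : ℕ∞) f →
        (∀ p : ℝ × ℝ, f (p.1 + 2 * π, p.2) = f p ∧ f (p.1, p.2 + 2 * π) = f p) →
        (∫ p in Set.Icc ((0 : ℝ), (0 : ℝ)) (2 * π, 2 * π), f p) = 0 →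
        (∫ p in Set.Icc ((0 : ℝ), (0 : ℝ)) (2 * π, 2 * π), (f p) ^ 4) ^ ((1 : ℝ) / 4) ≤
          C * (∫ p in Set.Icc ((0 : ℝ), (0 : ℝ)) (2 * π, 2 * π), (f p) ^ 2) ^ ((1 : ℝ) / 4) *
            (∫ p in Set.Icc ((0 : ℝ), (0 : ℝ)) (2 * π, 2 * π),
              ((fderiv ℝ f p (1, 0)) ^ 2 + (fderiv ℝ f p (0, 1)) ^ 2)) ^ ((1 : ℝ) / 4) := by
  refine ⟨2, by norm_num, ?_⟩
  intro f hf _ hmean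
  set X : ℝ := ∫ p in Set.Icc ((0:ℝ), (0:ℝ)) (2*π, 2*π), (f p) ^ 2 with hX
  set Y : ℝ := ∫ p in Set.Icc ((0:ℝ), (0:ℝ)) (2*π, 2*π),
      ((fderiv ℝ f p (1, 0)) ^ 2 + (fderiv ℝ f p (0, 1)) ^ 2) with hY
  set W : ℝ := ∫ p in Set.Icc ((0:ℝ), (0:ℝ)) (2*π, 2*π), (f p) ^ 4 with hW
  have hWnn : 0 ≤ W := setIntegral_nonneg measurableSet_Icc fun p _ => by positivity
  have hXnn : 0 ≤ X := setIntegral_nonneg measurableSet_Icc fun p _ => sq_nonneg _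
  have hYnn : 0 ≤ Y := setIntegral_nonneg measurableSet_Icc fun p _ => by positivity
  have hcore : W ≤ 16 * X * Y := my_core hf hmean
  clear_value X Y W
  have h1 : W ^ ((1:ℝ)/4) ≤ (16 * X * Y) ^ ((1:ℝ)/4) :=
    Real.rpow_le_rpow hWnn hcore (by norm_num)
  refine h1.trans (le_of_eq ?_)
  rw [Real.mul_rpow (by positivity) hYnn, Real.mul_rpow (by norm_num) hXnn]
  have h16 : (16:ℝ) ^ ((1:ℝ)/4) = 2 := by
    rw [show (16:ℝ) = 2 ^ (4:ℕ) by norm_num, ← Real.rpow_natCast 2 4,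
      ← Real.rpow_mul (by norm_num)]
    norm_num
  rw [h16]
end
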